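/- arXiv:1912.04725 — 5 statements merged into one kernel-verified Lean document; each statement's English description precedes it below -/
import Mathlib

section
/- For any i < j, k < l in [n] and any σ ∈ S_n: σ ≥ R_{i,k,l} and σ ≥ L_{i,j,l} in the Bruhat order if and only if σ ≥ T_{i,l}. In other words, the join of R_{i,k,l} and L_{i,j,l} in the Bruhat order is T_{i,l}. -/
/-!
`σ ≥ τ` in the Bruhat order means that the rank matrix `r_σ(a, b) = #{x ≤ a | σ x ≤ b}` lies
pointwise below `r_τ`, so it suffices to show `r_T = min r_R r_L` for `T = T_{i,l}`,
`R = R_{i,k,l}`, `L = L_{i,j,l}`. Now `R = T · (i k)` and `L = T · (j l)` undo the inversions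
`(i, k)` and `(j, l)` of `T`, and undoing an inversion `(p, q)` of `τ` raises `r_τ` by one exactly on
the rectangle `[p, q) × [τ q, τ p)`. The two rectangles `[i, k) × [k, l)` and `[j, l) × [i, j)` are
disjoint, so at every point one of `r_R`, `r_L` equals `r_T` and the other is at least `r_T`.
-/

namespace SmoothPerm

variable {n : ℕ}

/-- Bruhat order on `S_n`, via the standard counting criterion. -/
def bruhatLE (τ σ : Equiv.Perm (Fin n)) : Prop :=
  ∀ i j : Fin n,
    (Finset.univ.filter (fun x => x ≤ i ∧ σ x ≤ j)).card ≤
      (Finset.univ.filter (fun x => x ≤ i ∧ τ x ≤ j)).card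

/-- Number of inversions (the length ℓ(σ)). -/
def invNum (σ : Equiv.Perm (Fin n)) : ℕ :=
  (Finset.univ.filter (fun p : Fin n × Fin n => p.1 < p.2 ∧ σ p.2 < σ p.1)).card

def isTransposition (τ : Equiv.Perm (Fin n)) : Prop :=
  ∃ i j : Fin n, i < j ∧ τ = Equiv.swap i j

/-- σ is smooth iff ℓ(σ) equals the number of transpositions Bruhat-below σ. -/
def smooth (σ : Equiv.Perm (Fin n)) : Prop :=
  invNum σ = Nat.card {τ : Equiv.Perm (Fin n) // isTransposition τ ∧ bruhatLE τ σ}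

def avoids4231 (σ : Equiv.Perm (Fin n)) : Prop :=
  ¬ ∃ a b c d : Fin n, a < b ∧ b < c ∧ c < d ∧ σ d < σ b ∧ σ b < σ c ∧ σ c < σ a

/-- covexillary = 3412-avoiding. -/
def covexillary (σ : Equiv.Perm (Fin n)) : Prop :=
  ¬ ∃ a b c d : Fin n, a < b ∧ b < c ∧ c < d ∧ σ c < σ d ∧ σ d < σ a ∧ σ a < σ b

def avoids321 (σ : Equiv.Perm (Fin n)) : Prop :=
  ¬ ∃ a b c : Fin n, a < b ∧ b < c ∧ σ c < σ b ∧ σ b < σ a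

/-- The 3-cycle i ↦ j ↦ k ↦ i. -/
def Rc (i j k : Fin n) : Equiv.Perm (Fin n) := Equiv.swap i k * Equiv.swap i j

def Lc (i j k : Fin n) : Equiv.Perm (Fin n) := (Rc i j k)⁻¹

def inC23 (τ : Equiv.Perm (Fin n)) : Prop :=
  isTransposition τ ∨ ∃ i j k : Fin n, i < j ∧ j < k ∧ (τ = Rc i j k ∨ τ = Lc i j k)

/-- The 2-3-table of σ. -/
def Ctab (σ : Equiv.Perm (Fin n)) : Set (Equiv.Perm (Fin n)) :=
  {τ | inC23 τ ∧ bruhatLE τ σ}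

def admissible (A : Set (Equiv.Perm (Fin n))) : Prop :=
  (∀ τ ∈ A, inC23 τ) ∧
  (∀ σ ∈ A, ∀ τ : Equiv.Perm (Fin n), inC23 τ → bruhatLE τ σ → τ ∈ A) ∧
  (∀ i j k l : Fin n, i < j → j < l → i < k → k < l →
    Rc i j l ∈ A → Lc i k l ∈ A → Equiv.swap i l ∈ A) ∧
  (∀ i j k : Fin n, i < j → j < k →
    Equiv.swap i j ∈ A → Equiv.swap j k ∈ A → (Rc i j k ∈ A ∨ Lc i j k ∈ A))

def isWedge (A : Set (Equiv.Perm (Fin n))) (i j : Fin n) : Prop :=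
  i < j ∧ Equiv.swap i j ∈ A ∧
  (∀ i' : Fin n, (i' : ℕ) + 1 = (i : ℕ) → Equiv.swap i' i ∉ A) ∧
  (∀ j' : Fin n, (j : ℕ) + 1 = (j' : ℕ) → Rc i j j' ∉ A)

def derivedSet (A : Set (Equiv.Perm (Fin n))) (i j : Fin n) : Set (Equiv.Perm (Fin n)) :=
  A \ ({Equiv.swap i j} ∪ {τ | ∃ k, j < k ∧ τ = Lc i j k} ∪
       {τ | ∃ k, i < k ∧ k < j ∧ τ = Rc i k j})

def strictTotalOn (S : Set (Equiv.Perm (Fin n)))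
    (r : Equiv.Perm (Fin n) → Equiv.Perm (Fin n) → Prop) : Prop :=
  (∀ x ∈ S, ¬ r x x) ∧
  (∀ x ∈ S, ∀ y ∈ S, ∀ z ∈ S, r x y → r y z → r x z) ∧
  (∀ x ∈ S, ∀ y ∈ S, x ≠ y → r x y ∨ r y x)

def compatibleOrder (A : Set (Equiv.Perm (Fin n)))
    (r : Equiv.Perm (Fin n) → Equiv.Perm (Fin n) → Prop) : Prop :=
  (∀ i j k : Fin n, i < j → j < k → Rc i j k ∈ A → Lc i j k ∉ A →
    r (Equiv.swap i j) (Equiv.swap j k)) ∧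
  (∀ i j k : Fin n, i < j → j < k → Lc i j k ∈ A → Rc i j k ∉ A →
    r (Equiv.swap j k) (Equiv.swap i j)) ∧
  (∀ i j k : Fin n, i < j → j < k → Equiv.swap i k ∈ A →
    ((r (Equiv.swap i j) (Equiv.swap i k) ∧ r (Equiv.swap i k) (Equiv.swap j k)) ∨
     (r (Equiv.swap j k) (Equiv.swap i k) ∧ r (Equiv.swap i k) (Equiv.swap i j))))

def coversIn (S : Set (Equiv.Perm (Fin n)))
    (r : Equiv.Perm (Fin n) → Equiv.Perm (Fin n) → Prop)
    (x y : Equiv.Perm (Fin n)) : Prop :=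
  x ∈ S ∧ y ∈ S ∧ r x y ∧ ∀ z ∈ S, ¬ (r x z ∧ r z y)

/-- m_σ(i) = max σ([i]). -/
def maxS (σ : Equiv.Perm (Fin n)) (i : Fin n) : Fin n :=
  ((Finset.univ.filter (fun x => x ≤ i)).image (fun x => σ x)).max'
    ⟨σ i, Finset.mem_image_of_mem _ (by simp)⟩

/-- The cyclic shift i → i+1 → ⋯ → j → i. -/
def Rseg (i j : Fin n) : Equiv.Perm (Fin n) :=
  ((List.finRange n).filter (fun x => decide (i ≤ x ∧ x ≤ j))).formPerm

def definedByInclusions (σ : Equiv.Perm (Fin n)) : Prop :=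
  ∀ τ : Equiv.Perm (Fin n),
    (∀ x, maxS τ x ≤ maxS σ x) → (∀ x, maxS τ⁻¹ x ≤ maxS σ⁻¹ x) → bruhatLE τ σ

def rankCount (τ : Equiv.Perm (Fin n)) (a b : Fin n) : ℕ :=
  (Finset.univ.filter (fun x => x ≤ a ∧ τ x ≤ b)).card

theorem bruhatLE_iff_rankCount_le {τ σ : Equiv.Perm (Fin n)} :
    bruhatLE τ σ ↔ ∀ a b, rankCount σ a b ≤ rankCount τ a b :=
  Iff.rfl

theorem rankCount_mul_swap (τ : Equiv.Perm (Fin n)) {p q : Fin n} (hpq : p < q)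
    (hτ : τ q < τ p) (a b : Fin n) :
    rankCount (τ * Equiv.swap p q) a b =
      rankCount τ a b + if p ≤ a ∧ a < q ∧ τ q ≤ b ∧ b < τ p then 1 else 0 := by
  have hoff : ∑ x ∈ ({p, q} : Finset (Fin n))ᶜ,
        (if x ≤ a ∧ (τ * Equiv.swap p q) x ≤ b then 1 else 0) =
      ∑ x ∈ ({p, q} : Finset (Fin n))ᶜ, (if x ≤ a ∧ τ x ≤ b then 1 else 0) := by
    refine Finset.sum_congr rfl fun x hx => ?_
    simp only [Finset.mem_compl, Finset.mem_insert, Finset.mem_singleton, not_or] at hx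
    rw [Equiv.Perm.mul_apply, Equiv.swap_apply_of_ne_of_ne hx.1 hx.2]
  rw [rankCount, rankCount, Finset.card_filter, Finset.card_filter,
    ← Finset.sum_add_sum_compl {p, q}, ← Finset.sum_add_sum_compl {p, q}, hoff,
    Finset.sum_pair hpq.ne, Finset.sum_pair hpq.ne]
  simp only [Equiv.Perm.mul_apply, Equiv.swap_apply_left, Equiv.swap_apply_right]
  simp only [Fin.le_def, Fin.lt_def] at *
  split_ifs <;> omega

theorem Lc_eq_swap_mul_swap {i j l : Fin n} (hij : i ≠ j) (hjl : j ≠ l) :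
    Lc i j l = Equiv.swap i l * Equiv.swap j l := by
  rw [Lc, Rc, mul_inv_rev, Equiv.swap_inv, Equiv.swap_inv, Equiv.swap_mul_eq_mul_swap,
    Equiv.swap_inv, Equiv.swap_apply_left, Equiv.swap_apply_of_ne_of_ne hij.symm hjl,
    Equiv.swap_comm l]

theorem rankCount_swap_eq_min {i j k l : Fin n} (hij : i < j) (hjl : j < l) (hik : i < k)
    (hkl : k < l) (a b : Fin n) :
    rankCount (Equiv.swap i l) a b =
      min (rankCount (Rc i k l) a b) (rankCount (Lc i j l) a b) := by
  have hR := rankCount_mul_swap (Equiv.swap i l) hik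
    (by rwa [Equiv.swap_apply_left, Equiv.swap_apply_of_ne_of_ne hik.ne' hkl.ne]) a b
  have hL := rankCount_mul_swap (Equiv.swap i l) hjl
    (by rwa [Equiv.swap_apply_right, Equiv.swap_apply_of_ne_of_ne hij.ne' hjl.ne]) a b
  rw [Equiv.swap_apply_left, Equiv.swap_apply_of_ne_of_ne hik.ne' hkl.ne] at hR
  rw [Equiv.swap_apply_right, Equiv.swap_apply_of_ne_of_ne hij.ne' hjl.ne] at hL
  rw [Rc, hR, Lc_eq_swap_mul_swap hij.ne hjl.ne, hL]
  simp only [Fin.le_def, Fin.lt_def] at *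
  split_ifs <;> omega

/-- R_{i,k,l} ∨ L_{i,j,l} = T_{i,l}. -/
theorem join_R_L_eq_T (n : ℕ) (i j k l : Fin n)
    (hij : i < j) (hjl : j < l) (hik : i < k) (hkl : k < l)
    (σ : Equiv.Perm (Fin n)) :
    (bruhatLE (Rc i k l) σ ∧ bruhatLE (Lc i j l) σ) ↔ bruhatLE (Equiv.swap i l) σ := by
  simp only [bruhatLE_iff_rankCount_le, rankCount_swap_eq_min hij hjl hik hkl, le_min_iff,
    forall_and]

end SmoothPerm
end

section
/- If τ ∈ S_n is covexillary (avoids the pattern 3412), then its 2-3-table C(τ) is admissible: it is downward closed in Bruhat order, contains T_{i,l} whenever it contains R_{i,j,l} and L_{i,k,l} with i < j, k < l, and whenever T_{i,j}, T_{j,k} ∈ C(τ) with i < j < k, at least one of R_{i,j,k}, L_{i,j,k} belongs to C(τ). -/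
namespace SmoothPerm

variable {n : ℕ}

/-! A 2- or 3-cycle `π` has the rank function `(x, y) ↦ #{z ≤ x | π z ≤ y}` of the identity,
`min x y + 1`, except that it falls one short on a union of at most two rectangles. Hence `π ≤ σ`
in Bruhat order says that the rank function of `σ` falls short on these rectangles too, which for
a rectangle `[x₀, x₁) × [y₀, y₁)` means that `σ` has a point weakly north-west of `(x₀, y₁)` and
one weakly south-east of `(x₁, y₀)`. Membership of `T_{i,j}`, `R_{i,j,k}`, `L_{i,j,k}` in `C(σ)`
thus becomes the presence of two or three points of `σ` in prescribed quadrants. This gives the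
condition on `T_{i,l}` directly; and if `T_{i,j}, T_{j,k} ∈ C(σ)` while
`R_{i,j,k}, L_{i,j,k} ∉ C(σ)`, the four points witnessing the two transpositions form a `3412`
pattern. -/

open Finset Equiv

section BruhatRank

def bruhatRank (σ : Perm (Fin n)) (x y : Fin n) : ℕ := #{z | z ≤ x ∧ σ z ≤ y}

variable {σ : Perm (Fin n)} {x y : Fin n}

theorem bruhatLE_iff_bruhatRank {τ : Perm (Fin n)} :
    bruhatLE τ σ ↔ ∀ x y, bruhatRank σ x y ≤ bruhatRank τ x y := Iff.rfl

theorem bruhatLE_trans {ρ τ : Perm (Fin n)} (h₁ : bruhatLE ρ τ) (h₂ : bruhatLE τ σ) :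
    bruhatLE ρ σ :=
  fun x y => (h₂ x y).trans (h₁ x y)

theorem bruhatRank_inv (σ : Perm (Fin n)) (x y : Fin n) :
    bruhatRank σ⁻¹ y x = bruhatRank σ x y :=
  card_equiv σ⁻¹ fun w => by simp [and_comm]

theorem bruhatRank_le_left_iff : bruhatRank σ x y ≤ x ↔ ∃ a ≤ x, y < σ a := by
  have h : bruhatRank σ x y + #{z | z ≤ x ∧ ¬σ z ≤ y} = x + 1 := by
    rw [← Fin.card_Iic, ← card_filter_add_card_filter_not (s := Iic x) (fun z => σ z ≤ y),
      ← filter_ge_eq_Iic, filter_filter, filter_filter, bruhatRank]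
  calc bruhatRank σ x y ≤ x ↔ 0 < #{z | z ≤ x ∧ ¬σ z ≤ y} := by omega
    _ ↔ ∃ a ≤ x, y < σ a := by simp [card_pos, Finset.Nonempty]

theorem bruhatRank_le_right_iff : bruhatRank σ x y ≤ y ↔ ∃ b, x < b ∧ σ b ≤ y := by
  rw [← bruhatRank_inv, bruhatRank_le_left_iff]
  exact ⟨fun ⟨a, ha, hxa⟩ => ⟨σ⁻¹ a, hxa, by simpa⟩, fun ⟨b, hxb, hb⟩ => ⟨σ b, hb, by simpa⟩⟩

theorem bruhatRank_le_left_add_one (σ : Perm (Fin n)) (x y : Fin n) :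
    bruhatRank σ x y ≤ x + 1 := by
  rw [← Fin.card_Iic, ← filter_ge_eq_Iic]
  exact card_le_card fun z hz => mem_filter.2 ⟨mem_univ z, (mem_filter.1 hz).2.1⟩

theorem bruhatRank_le_min_add_one (σ : Perm (Fin n)) (x y : Fin n) :
    bruhatRank σ x y ≤ min (x : ℕ) y + 1 := by
  have := bruhatRank_le_left_add_one σ x y
  have := bruhatRank_inv σ x y ▸ bruhatRank_le_left_add_one σ⁻¹ y x
  omega

theorem bruhatRank_le_min_iff :
    bruhatRank σ x y ≤ min (x : ℕ) y ↔ (∃ a ≤ x, y < σ a) ∧ ∃ b, x < b ∧ σ b ≤ y := by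
  rw [le_min_iff, bruhatRank_le_left_iff, bruhatRank_le_right_iff]

theorem bruhatLE_iff_of_bruhatRank_add_ite {π : Perm (Fin n)} (R : Fin n → Fin n → Prop)
    [DecidableRel R] (hπ : ∀ x y, bruhatRank π x y + (if R x y then 1 else 0) = min (x : ℕ) y + 1) :
    bruhatLE π σ ↔ ∀ x y, R x y → bruhatRank σ x y ≤ min (x : ℕ) y := by
  rw [bruhatLE_iff_bruhatRank]
  refine ⟨fun h x y hR => ?_, fun h x y => ?_⟩
  · have := hπ x y
    have := h x y
    rw [if_pos hR] at *
    omega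
  · have := hπ x y
    split_ifs at this with hR
    · have := h x y hR
      omega
    · have := bruhatRank_le_min_add_one σ x y
      omega

theorem forall_rect_bruhatRank_le_min_iff {x₀ x₁ y₀ y₁ : Fin n} (hx : x₀ < x₁) (hy : y₀ < y₁) :
    (∀ x y, x₀ ≤ x ∧ x < x₁ ∧ y₀ ≤ y ∧ y < y₁ → bruhatRank σ x y ≤ min (x : ℕ) y) ↔
      (∃ a ≤ x₀, y₁ ≤ σ a) ∧ ∃ b, x₁ ≤ b ∧ σ b ≤ y₀ := by
  simp only [bruhatRank_le_min_iff]
  constructor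
  · intro h
    let x' : Fin n := ⟨x₁ - 1, by omega⟩
    let y' : Fin n := ⟨y₁ - 1, by omega⟩
    have hx' : (x' : ℕ) = x₁ - 1 := rfl
    have hy' : (y' : ℕ) = y₁ - 1 := rfl
    obtain ⟨⟨a, ha, hya⟩, -⟩ := h x₀ y' (by omega)
    obtain ⟨-, b, hxb, hby⟩ := h x' y₀ (by omega)
    exact ⟨⟨a, ha, by omega⟩, b, by omega, hby⟩
  · rintro ⟨⟨a, ha, hya⟩, b, hb, hby⟩ x y ⟨hx₀, hx₁, hy₀, hy₁⟩
    exact ⟨⟨a, ha.trans hx₀, hy₁.trans_le hya⟩, b, hx₁.trans_le hb, hby.trans hy₀⟩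

theorem bruhatRank_add_sum_eq {π : Perm (Fin n)} (T : Finset (Fin n)) (hT : ∀ z ∉ T, π z = z)
    (x y : Fin n) :
    bruhatRank π x y + ∑ z ∈ T, (if z ≤ x ∧ z ≤ y then 1 else 0) =
      min (x : ℕ) y + 1 + ∑ z ∈ T, (if z ≤ x ∧ π z ≤ y then 1 else 0) := by
  have hid : min (x : ℕ) y + 1 = ∑ z, if z ≤ x ∧ z ≤ y then 1 else 0 := by
    rw [sum_boole, Nat.cast_id, ← Fin.coe_min, ← Fin.card_Iic, ← filter_ge_eq_Iic]
    simp only [le_min_iff]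
  have hπ : bruhatRank π x y = ∑ z, if z ≤ x ∧ π z ≤ y then 1 else 0 := by
    rw [sum_boole, Nat.cast_id, bruhatRank]
  have hc : ∑ z ∈ Tᶜ, (if z ≤ x ∧ π z ≤ y then 1 else 0) =
      ∑ z ∈ Tᶜ, (if z ≤ x ∧ z ≤ y then 1 else 0) :=
    sum_congr rfl fun z hz => by rw [hT z (mem_compl.1 hz)]
  rw [hπ, hid, ← sum_compl_add_sum T, ← sum_compl_add_sum T, hc]
  ring

theorem bruhatRank_swap_add_ite {i j : Fin n} (hij : i < j) (x y : Fin n) :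
    bruhatRank (swap i j) x y + (if i ≤ x ∧ x < j ∧ i ≤ y ∧ y < j then 1 else 0) =
      min (x : ℕ) y + 1 := by
  have h := bruhatRank_add_sum_eq {i, j} (π := swap i j)
    (fun z hz => swap_apply_of_ne_of_ne (by simp_all) (by simp_all)) x y
  rw [sum_pair hij.ne, sum_pair hij.ne, swap_apply_left, swap_apply_right] at h
  split_ifs at h ⊢ <;> omega

end BruhatRank

section Cycles

variable {i j k : Fin n}

theorem Rc_apply_left (hij : i < j) (hjk : j < k) : Rc i j k i = j := by
  simp [Rc, swap_apply_of_ne_of_ne hij.ne' hjk.ne]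

theorem Rc_apply_mid : Rc i j k j = k := by
  simp [Rc]

theorem Rc_apply_right (hij : i < j) (hjk : j < k) : Rc i j k k = i := by
  simp [Rc, swap_apply_of_ne_of_ne (hij.trans hjk).ne' hjk.ne']

theorem Rc_apply_of_ne {z : Fin n} (hi : z ≠ i) (hj : z ≠ j) (hk : z ≠ k) : Rc i j k z = z := by
  simp [Rc, swap_apply_of_ne_of_ne, hi, hj, hk]

theorem bruhatRank_Rc_add_ite (hij : i < j) (hjk : j < k) (x y : Fin n) :
    bruhatRank (Rc i j k) x y +
        (if (i ≤ x ∧ x < k ∧ i ≤ y ∧ y < j) ∨ (j ≤ x ∧ x < k ∧ j ≤ y ∧ y < k) then 1 else 0) =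
      min (x : ℕ) y + 1 := by
  have h := bruhatRank_add_sum_eq {i, j, k} (π := Rc i j k)
    (fun z hz => Rc_apply_of_ne (by simp_all) (by simp_all) (by simp_all)) x y
  have hsum (f : Fin n → ℕ) : ∑ z ∈ {i, j, k}, f z = f i + (f j + f k) := by
    rw [sum_insert (by simp [hij.ne, (hij.trans hjk).ne]), sum_pair hjk.ne]
  rw [hsum, hsum, Rc_apply_left hij hjk, Rc_apply_mid, Rc_apply_right hij hjk] at h
  split_ifs at h ⊢ <;> omega

theorem bruhatRank_Lc_add_ite (hij : i < j) (hjk : j < k) (x y : Fin n) :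
    bruhatRank (Lc i j k) x y +
        (if (i ≤ x ∧ x < j ∧ i ≤ y ∧ y < k) ∨ (j ≤ x ∧ x < k ∧ j ≤ y ∧ y < k) then 1 else 0) =
      min (x : ℕ) y + 1 := by
  have h := bruhatRank_Rc_add_ite hij hjk y x
  rw [Lc, bruhatRank_inv]
  split_ifs at h ⊢ <;> omega

variable {σ : Perm (Fin n)}

theorem bruhatLE_swap_iff (hij : i < j) :
    bruhatLE (swap i j) σ ↔ (∃ a ≤ i, j ≤ σ a) ∧ ∃ b, j ≤ b ∧ σ b ≤ i := by
  rw [bruhatLE_iff_of_bruhatRank_add_ite _ (bruhatRank_swap_add_ite hij),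
    forall_rect_bruhatRank_le_min_iff hij hij]

theorem bruhatLE_Rc_iff (hij : i < j) (hjk : j < k) :
    bruhatLE (Rc i j k) σ ↔
      (∃ a ≤ i, j ≤ σ a) ∧ (∃ a ≤ j, k ≤ σ a) ∧ ∃ b, k ≤ b ∧ σ b ≤ i := by
  rw [bruhatLE_iff_of_bruhatRank_add_ite _ (bruhatRank_Rc_add_ite hij hjk)]
  simp only [or_imp, forall_and]
  rw [forall_rect_bruhatRank_le_min_iff (hij.trans hjk) hij,
    forall_rect_bruhatRank_le_min_iff hjk hjk]
  constructor
  · rintro ⟨⟨hi, hk⟩, hj, -⟩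
    exact ⟨hi, hj, hk⟩
  · rintro ⟨hi, hj, b, hkb, hbi⟩
    exact ⟨⟨hi, b, hkb, hbi⟩, hj, b, hkb, hbi.trans hij.le⟩

theorem bruhatLE_Lc_iff (hij : i < j) (hjk : j < k) :
    bruhatLE (Lc i j k) σ ↔
      (∃ a ≤ i, k ≤ σ a) ∧ (∃ b, j ≤ b ∧ σ b ≤ i) ∧ ∃ b, k ≤ b ∧ σ b ≤ j := by
  rw [bruhatLE_iff_of_bruhatRank_add_ite _ (bruhatRank_Lc_add_ite hij hjk)]
  simp only [or_imp, forall_and]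
  rw [forall_rect_bruhatRank_le_min_iff hij (hij.trans hjk),
    forall_rect_bruhatRank_le_min_iff hjk hjk]
  constructor
  · rintro ⟨⟨hi, hj⟩, -, hk⟩
    exact ⟨hi, hj, hk⟩
  · rintro ⟨⟨a, hai, hka⟩, hj, hk⟩
    exact ⟨⟨⟨a, hai, hka⟩, hj⟩, ⟨a, hai.trans hij.le, hka⟩, hk⟩

theorem swap_bruhatLE_of_Rc_of_Lc {l : Fin n} (hij : i < j) (hjl : j < l) (hik : i < k)
    (hkl : k < l) (hR : bruhatLE (Rc i j l) σ) (hL : bruhatLE (Lc i k l) σ) :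
    bruhatLE (swap i l) σ :=
  (bruhatLE_swap_iff (hij.trans hjl)).2
    ⟨((bruhatLE_Lc_iff hik hkl).1 hL).1, ((bruhatLE_Rc_iff hij hjl).1 hR).2.2⟩

theorem Rc_or_Lc_bruhatLE_of_covexillary (hσ : covexillary σ) (hij : i < j) (hjk : j < k)
    (h₁ : bruhatLE (swap i j) σ) (h₂ : bruhatLE (swap j k) σ) :
    bruhatLE (Rc i j k) σ ∨ bruhatLE (Lc i j k) σ := by
  obtain ⟨⟨a₁, ha₁, hσa₁⟩, b₁, hb₁, hσb₁⟩ := (bruhatLE_swap_iff hij).1 h₁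
  obtain ⟨⟨a₂, ha₂, hσa₂⟩, b₂, hb₂, hσb₂⟩ := (bruhatLE_swap_iff hjk).1 h₂
  rw [bruhatLE_Rc_iff hij hjk, bruhatLE_Lc_iff hij hjk]
  by_contra hne
  obtain ⟨hnR, hnL⟩ := not_or.1 hne
  have hR (b : Fin n) (hb : k ≤ b) : i < σ b :=
    not_le.1 fun hbi => hnR ⟨⟨a₁, ha₁, hσa₁⟩, ⟨a₂, ha₂, hσa₂⟩, b, hb, hbi⟩
  have hL (a : Fin n) (ha : a ≤ i) : σ a < k :=
    not_le.1 fun hka => hnL ⟨⟨a, ha, hka⟩, ⟨b₁, hb₁, hσb₁⟩, b₂, hb₂, hσb₂⟩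
  have ha₁a₂ : a₁ < a₂ := by
    by_contra! h
    have := hL a₂ (h.trans ha₁)
    omega
  have ha₂b₁ : a₂ ≠ b₁ := by
    rintro rfl
    omega
  have hb₁k : b₁ < k := by
    by_contra! h
    have := hR b₁ h
    omega
  have hσb₁b₂ := hR b₂ hb₂
  have hσa₁a₂ := hL a₁ ha₁
  have hσb₂a₁ : σ b₂ ≠ σ a₁ := σ.injective.ne (by omega)
  exact hσ ⟨a₁, a₂, b₁, b₂, ha₁a₂, by omega, by omega, by omega, by omega, by omega⟩

theorem swap_mem_Ctab_iff (hij : i < j) : swap i j ∈ Ctab σ ↔ bruhatLE (swap i j) σ :=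
  ⟨And.right, And.intro (Or.inl ⟨i, j, hij, rfl⟩)⟩

theorem Rc_mem_Ctab_iff (hij : i < j) (hjk : j < k) : Rc i j k ∈ Ctab σ ↔ bruhatLE (Rc i j k) σ :=
  ⟨And.right, And.intro (Or.inr ⟨i, j, k, hij, hjk, Or.inl rfl⟩)⟩

theorem Lc_mem_Ctab_iff (hij : i < j) (hjk : j < k) : Lc i j k ∈ Ctab σ ↔ bruhatLE (Lc i j k) σ :=
  ⟨And.right, And.intro (Or.inr ⟨i, j, k, hij, hjk, Or.inr rfl⟩)⟩

end Cycles

/-- if τ is covexillary then C(τ) is admissible. -/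
theorem covexillary_Ctab_admissible (n : ℕ) (τ : Equiv.Perm (Fin n))
    (h : covexillary τ) : admissible (Ctab τ) := by
  refine ⟨fun _ hρ => hρ.1, fun ρ hρ π hπ hπρ => ⟨hπ, bruhatLE_trans hπρ hρ.2⟩, ?_, ?_⟩
  · intro i j k l hij hjl hik hkl hR hL
    rw [Rc_mem_Ctab_iff hij hjl] at hR
    rw [Lc_mem_Ctab_iff hik hkl] at hL
    exact (swap_mem_Ctab_iff (hij.trans hjl)).2 (swap_bruhatLE_of_Rc_of_Lc hij hjl hik hkl hR hL)
  · intro i j k hij hjk h₁ h₂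
    rw [swap_mem_Ctab_iff hij] at h₁
    rw [swap_mem_Ctab_iff hjk] at h₂
    rw [Rc_mem_Ctab_iff hij hjk, Lc_mem_Ctab_iff hij hjk]
    exact Rc_or_Lc_bruhatLE_of_covexillary h hij hjk h₁ h₂

end SmoothPerm
end

section
/- For every nonempty admissible subset A of C^{2,3}, at least one of A or A^{-1} has a wedge: namely, if T_{i,j} ∈ A with i minimal and j maximal for that i, then T_{i,j} is a wedge for A or for A^{-1}. -/
namespace SmoothPerm

variable {n : ℕ}

/- Since `i` is minimal, no transposition `T_{i-1,i}` lies in `A`; to the right, `R_{i,j,j+1}` and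
`L_{i,j,j+1}` cannot both lie in `A`, since admissibility would then put `T_{i,j+1}` in `A`
against the maximality of `j`. Whichever of the two is missing gives the wedge, for `A` or
for `A⁻¹`. -/

theorem isWedge_inv_iff {A : Set (Equiv.Perm (Fin n))} {i j : Fin n} :
    isWedge {σ | σ⁻¹ ∈ A} i j ↔
      i < j ∧ Equiv.swap i j ∈ A ∧
      (∀ i' : Fin n, (i' : ℕ) + 1 = (i : ℕ) → Equiv.swap i' i ∉ A) ∧
      (∀ j' : Fin n, (j : ℕ) + 1 = (j' : ℕ) → Lc i j j' ∉ A) := by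
  simp only [isWedge, Set.mem_ofPred_eq, Equiv.swap_inv, Lc]

theorem swap_pred_not_mem {A : Set (Equiv.Perm (Fin n))} {i : Fin n}
    (hmin : ∀ a b : Fin n, a < b → Equiv.swap a b ∈ A → i ≤ a) (i' : Fin n)
    (hi' : (i' : ℕ) + 1 = (i : ℕ)) : Equiv.swap i' i ∉ A := fun hmem =>
  have hlt : i' < i := Fin.lt_def.mpr (by omega)
  (hmin i' i hlt hmem).not_gt hlt

theorem not_Rc_mem_and_Lc_mem {A : Set (Equiv.Perm (Fin n))} (hA : admissible A)
    {i j k : Fin n} (hij : i < j) (hjk : j < k)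
    (hmax : ∀ b : Fin n, i < b → Equiv.swap i b ∈ A → b ≤ j) :
    ¬ (Rc i j k ∈ A ∧ Lc i j k ∈ A) := fun ⟨hR, hL⟩ =>
  (hmax k (hij.trans hjk) (hA.2.2.1 i j j k hij hjk hij hjk hR hL)).not_gt hjk

/-- existence of a wedge for A or A⁻¹. -/
theorem exists_wedge (n : ℕ) (A : Set (Equiv.Perm (Fin n))) (hA : admissible A)
    (i j : Fin n) (hij : i < j) (hmem : Equiv.swap i j ∈ A)
    (hmin : ∀ a b : Fin n, a < b → Equiv.swap a b ∈ A → i ≤ a)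
    (hmax : ∀ b : Fin n, i < b → Equiv.swap i b ∈ A → b ≤ j) :
    isWedge A i j ∨ isWedge {σ | σ⁻¹ ∈ A} i j := by
  by_cases hR : ∀ j' : Fin n, (j : ℕ) + 1 = (j' : ℕ) → Rc i j j' ∉ A
  · exact Or.inl ⟨hij, hmem, swap_pred_not_mem hmin, hR⟩
  · push Not at hR
    obtain ⟨k, hk, hRk⟩ := hR
    refine Or.inr (isWedge_inv_iff.mpr ⟨hij, hmem, swap_pred_not_mem hmin, ?_⟩)
    intro k' hk' hLk'
    obtain rfl : k' = k := Fin.ext (by omega)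
    exact not_Rc_mem_and_Lc_mem hA hij (Fin.lt_def.mpr (by omega)) hmax ⟨hRk, hLk'⟩

end SmoothPerm
end

section
/- If A ⊆ C^{2,3} is admissible and T_{i,j} is a wedge for A, then the derived set A' = A \ ({T_{i,j}} ∪ {L_{i,j,k} : k > j} ∪ {R_{i,k,j} : i < k < j}) is admissible, and if j > i+1 then T_{i,j-1} is a wedge for A'. -/
namespace SmoothPerm

variable {n : ℕ}

/- ### auxiliary machinery ### -/

lemma swap_val (x y z : Fin n) :
    ((Equiv.swap x y z : Fin n) : ℕ) =
      if (z : ℕ) = x then y else if (z : ℕ) = y then x else z := by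
  rw [Equiv.swap_apply_def]
  split_ifs <;> simp_all [Fin.ext_iff]

lemma Rc_val (a b c x : Fin n) (hab : (a:ℕ) < b) (hbc : (b:ℕ) < c) :
    ((Rc a b c x : Fin n) : ℕ) =
      if (x:ℕ) = a then b else if (x:ℕ) = b then c else if (x:ℕ) = c then a else x := by
  have h1 := swap_val a b x
  have h2 := swap_val a c (Equiv.swap a b x)
  have hx : Rc a b c x = Equiv.swap a c (Equiv.swap a b x) := rfl
  rw [hx, h2]
  split_ifs at h1 ⊢ <;> omega

lemma Lc_val (a b c x : Fin n) (hab : (a:ℕ) < b) (hbc : (b:ℕ) < c) :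
    ((Lc a b c x : Fin n) : ℕ) =
      if (x:ℕ) = a then c else if (x:ℕ) = b then a else if (x:ℕ) = c then b else x := by
  have h1 := swap_val a c x
  have h2 := swap_val a b (Equiv.swap a c x)
  have hx : Lc a b c x = Equiv.swap a b (Equiv.swap a c x) := by
    simp [Lc, Rc, mul_inv_rev]
  rw [hx, h2]
  split_ifs at h1 ⊢ <;> omega

def cnt (σ : Equiv.Perm (Fin n)) (i j : Fin n) : ℕ :=
  (Finset.univ.filter (fun x => x ≤ i ∧ σ x ≤ j)).card

def dd (σ : Equiv.Perm (Fin n)) (i j : Fin n) : ℤ :=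
  (min (i:ℕ) (j:ℕ) + 1 : ℤ) - cnt σ i j

lemma bruhat_iff_dd (τ σ : Equiv.Perm (Fin n)) :
    bruhatLE τ σ ↔ ∀ i j : Fin n, dd τ i j ≤ dd σ i j := by
  unfold bruhatLE dd cnt
  constructor <;> intro h i j <;> have := h i j <;> omega

lemma cnt_id_eq (i j : Fin n) :
    (Finset.univ.filter (fun x : Fin n => x ≤ i ∧ x ≤ j)).card = min (i:ℕ) (j:ℕ) + 1 := by
  have h : (Finset.univ.filter (fun x : Fin n => x ≤ i ∧ x ≤ j)) = Finset.Iic (min i j) := by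
    ext x
    simp [le_min_iff]
  rw [h, Fin.card_Iic]
  have : ((min i j : Fin n) : ℕ) = min (i:ℕ) (j:ℕ) := by
    rw [min_def, min_def]
    split_ifs with h1 h2 <;> first | rfl | (exfalso; rw [Fin.le_def] at *; omega)
  omega

lemma dd_eq_sum (σ : Equiv.Perm (Fin n)) (i j : Fin n) :
    dd σ i j = ∑ x : Fin n,
      ((if x ≤ i ∧ x ≤ j then (1:ℤ) else 0) - (if x ≤ i ∧ σ x ≤ j then (1:ℤ) else 0)) := by
  rw [Finset.sum_sub_distrib]
  have h1 : ∑ x : Fin n, (if x ≤ i ∧ x ≤ j then (1:ℤ) else 0)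
      = ((min (i:ℕ) (j:ℕ) + 1 : ℕ) : ℤ) := by
    rw [← cnt_id_eq i j, Finset.card_filter]
    push_cast
    rfl
  have h2 : ∑ x : Fin n, (if x ≤ i ∧ σ x ≤ j then (1:ℤ) else 0) = (cnt σ i j : ℤ) := by
    rw [cnt, Finset.card_filter]
    push_cast
    rfl
  rw [h1, h2, dd]
  push_cast
  ring

lemma fin_eq_of_val {a b : Fin n} (h : (a:ℕ) = b) : a = b := Fin.ext h

lemma swap_fix (x y z : Fin n) (h1 : (z:ℕ) ≠ x) (h2 : (z:ℕ) ≠ y) : Equiv.swap x y z = z := by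
  apply fin_eq_of_val; rw [swap_val]; split_ifs <;> omega

lemma dd_swap (a b i j : Fin n) (hab : (a:ℕ) < b) :
    dd (Equiv.swap a b) i j =
      if (a:ℕ) ≤ i ∧ (i:ℕ) < b ∧ (a:ℕ) ≤ j ∧ (j:ℕ) < b then 1 else 0 := by
  rw [dd_eq_sum]
  rw [← Finset.sum_subset (Finset.subset_univ ({a, b} : Finset (Fin n)))]
  · have hne : a ∉ ({b} : Finset (Fin n)) := by
      simp [Fin.ext_iff]; omega
    rw [Finset.sum_insert hne, Finset.sum_singleton]
    have e1 : Equiv.swap a b a = b := Equiv.swap_apply_left a b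
    have e2 : Equiv.swap a b b = a := Equiv.swap_apply_right a b
    rw [e1, e2]
    simp only [Fin.le_def]
    split_ifs <;> omega
  · intro x _ hx
    simp only [Finset.mem_insert, Finset.mem_singleton] at hx
    push_neg at hx
    rw [swap_fix a b x (fun h => hx.1 (fin_eq_of_val h)) (fun h => hx.2 (fin_eq_of_val h))]
    ring

lemma Rc_abc (a b c : Fin n) (hab : (a:ℕ) < b) (hbc : (b:ℕ) < c) :
    Rc a b c a = b ∧ Rc a b c b = c ∧ Rc a b c c = a := by
  refine ⟨fin_eq_of_val ?_, fin_eq_of_val ?_, fin_eq_of_val ?_⟩ <;>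
    rw [Rc_val _ _ _ _ hab hbc] <;> split_ifs <;> omega

lemma Rc_fix (a b c x : Fin n) (hab : (a:ℕ) < b) (hbc : (b:ℕ) < c)
    (h1 : (x:ℕ) ≠ a) (h2 : (x:ℕ) ≠ b) (h3 : (x:ℕ) ≠ c) : Rc a b c x = x := by
  apply fin_eq_of_val; rw [Rc_val _ _ _ _ hab hbc]; split_ifs <;> omega

lemma Lc_abc (a b c : Fin n) (hab : (a:ℕ) < b) (hbc : (b:ℕ) < c) :
    Lc a b c a = c ∧ Lc a b c b = a ∧ Lc a b c c = b := by
  refine ⟨fin_eq_of_val ?_, fin_eq_of_val ?_, fin_eq_of_val ?_⟩ <;>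
    rw [Lc_val _ _ _ _ hab hbc] <;> split_ifs <;> omega

lemma Lc_fix (a b c x : Fin n) (hab : (a:ℕ) < b) (hbc : (b:ℕ) < c)
    (h1 : (x:ℕ) ≠ a) (h2 : (x:ℕ) ≠ b) (h3 : (x:ℕ) ≠ c) : Lc a b c x = x := by
  apply fin_eq_of_val; rw [Lc_val _ _ _ _ hab hbc]; split_ifs <;> omega

lemma sum_abc (a b c : Fin n) (hab : (a:ℕ) < b) (hbc : (b:ℕ) < c) (F : Fin n → ℤ)
    (hF : ∀ x : Fin n, (x:ℕ) ≠ a → (x:ℕ) ≠ b → (x:ℕ) ≠ c → F x = 0) :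
    ∑ x : Fin n, F x = F a + F b + F c := by
  rw [← Finset.sum_subset (Finset.subset_univ ({a, b, c} : Finset (Fin n)))]
  · have h1 : a ∉ ({b, c} : Finset (Fin n)) := by simp [Fin.ext_iff]; omega
    have h2 : b ∉ ({c} : Finset (Fin n)) := by simp [Fin.ext_iff]; omega
    rw [Finset.sum_insert h1, Finset.sum_insert h2, Finset.sum_singleton]
    ring
  · intro x _ hx
    simp only [Finset.mem_insert, Finset.mem_singleton] at hx
    push_neg at hx
    exact hF x (fun h => hx.1 (fin_eq_of_val h)) (fun h => hx.2.1 (fin_eq_of_val h))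
      (fun h => hx.2.2 (fin_eq_of_val h))

lemma dd_R (a b c i j : Fin n) (hab : (a:ℕ) < b) (hbc : (b:ℕ) < c) :
    dd (Rc a b c) i j =
      (if (a:ℕ) ≤ i ∧ (i:ℕ) < b ∧ (a:ℕ) ≤ j ∧ (j:ℕ) < b then 1 else 0) +
      (if (b:ℕ) ≤ i ∧ (i:ℕ) < c ∧ (a:ℕ) ≤ j ∧ (j:ℕ) < c then 1 else 0) := by
  rw [dd_eq_sum]
  rw [sum_abc a b c hab hbc _ (fun (x : Fin n) h1 h2 h3 => by
    rw [Rc_fix a b c x hab hbc h1 h2 h3]; ring)]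
  obtain ⟨e1, e2, e3⟩ := Rc_abc a b c hab hbc
  rw [e1, e2, e3]
  simp only [Fin.le_def]
  split_ifs <;> omega

lemma dd_L (a b c i j : Fin n) (hab : (a:ℕ) < b) (hbc : (b:ℕ) < c) :
    dd (Lc a b c) i j =
      (if (a:ℕ) ≤ i ∧ (i:ℕ) < b ∧ (a:ℕ) ≤ j ∧ (j:ℕ) < b then 1 else 0) +
      (if (a:ℕ) ≤ i ∧ (i:ℕ) < c ∧ (b:ℕ) ≤ j ∧ (j:ℕ) < c then 1 else 0) := by
  rw [dd_eq_sum]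
  rw [sum_abc a b c hab hbc _ (fun (x : Fin n) h1 h2 h3 => by
    rw [Lc_fix a b c x hab hbc h1 h2 h3]; ring)]
  obtain ⟨e1, e2, e3⟩ := Lc_abc a b c hab hbc
  rw [e1, e2, e3]
  simp only [Fin.le_def]
  split_ifs <;> omega

section IndLe
variable {C1 C2 D1 D2 : Prop} [Decidable C1] [Decidable C2] [Decidable D1] [Decidable D2]

lemma ind11 (h : (if C1 then (1:ℤ) else 0) ≤ (if D1 then 1 else 0)) (hc : C1) : D1 := by
  split_ifs at h <;> first | assumption | omega

lemma ind12 (h : (if C1 then (1:ℤ) else 0) ≤ (if D1 then 1 else 0) + (if D2 then 1 else 0))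
    (hc : C1) : D1 ∨ D2 := by
  split_ifs at h <;> first | tauto | omega

lemma ind21 (h : (if C1 then (1:ℤ) else 0) + (if C2 then 1 else 0) ≤ (if D1 then 1 else 0))
    (hc : C1 ∨ C2) : D1 := by
  split_ifs at h <;> first | tauto | omega

lemma ind22 (h : (if C1 then (1:ℤ) else 0) + (if C2 then 1 else 0) ≤
    (if D1 then 1 else 0) + (if D2 then 1 else 0)) (hc : C1 ∨ C2) : D1 ∨ D2 := by
  split_ifs at h <;> first | tauto | omega

end IndLe

lemma le_tt {x y p q : Fin n} (hxy : (x:ℕ) < y) (hpq : (p:ℕ) < q) :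
    bruhatLE (Equiv.swap x y) (Equiv.swap p q) ↔ ((p:ℕ) ≤ x ∧ (y:ℕ) ≤ q) := by
  rw [bruhat_iff_dd]
  constructor
  · intro h
    have hy : (y:ℕ) - 1 < n := lt_of_le_of_lt (Nat.sub_le _ _) y.isLt
    have h1 := h x x
    have h2 := h ⟨(y:ℕ)-1, hy⟩ ⟨(y:ℕ)-1, hy⟩
    rw [dd_swap _ _ _ _ hxy, dd_swap _ _ _ _ hpq] at h1 h2
    have g1 := ind11 h1 (by omega)
    have g2 := ind11 h2 (by (try simp only [Fin.val_mk]); omega)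
    try simp only [Fin.val_mk] at g1
    try simp only [Fin.val_mk] at g2
    omega
  · intro hc i j
    rw [dd_swap _ _ _ _ hxy, dd_swap _ _ _ _ hpq]
    split_ifs <;> omega

lemma le_tR {x y a b c : Fin n} (hxy : (x:ℕ) < y) (hab : (a:ℕ) < b) (hbc : (b:ℕ) < c) :
    bruhatLE (Equiv.swap x y) (Rc a b c) ↔
      (((a:ℕ) ≤ x ∧ (y:ℕ) ≤ b) ∨ ((b:ℕ) ≤ x ∧ (y:ℕ) ≤ c)) := by
  rw [bruhat_iff_dd]
  constructor
  · intro h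
    have hy : (y:ℕ) - 1 < n := lt_of_le_of_lt (Nat.sub_le _ _) y.isLt
    have h1 := h x ⟨(y:ℕ)-1, hy⟩
    rw [dd_swap _ _ _ _ hxy, dd_R _ _ _ _ _ hab hbc] at h1
    have g1 := ind12 h1 (by (try simp only [Fin.val_mk]); omega)
    try simp only [Fin.val_mk] at g1
    omega
  · intro hc i j
    rw [dd_swap _ _ _ _ hxy, dd_R _ _ _ _ _ hab hbc]
    split_ifs <;> omega

lemma le_tL {x y a b c : Fin n} (hxy : (x:ℕ) < y) (hab : (a:ℕ) < b) (hbc : (b:ℕ) < c) :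
    bruhatLE (Equiv.swap x y) (Lc a b c) ↔
      (((a:ℕ) ≤ x ∧ (y:ℕ) ≤ b) ∨ ((b:ℕ) ≤ x ∧ (y:ℕ) ≤ c)) := by
  rw [bruhat_iff_dd]
  constructor
  · intro h
    have hy : (y:ℕ) - 1 < n := lt_of_le_of_lt (Nat.sub_le _ _) y.isLt
    have h1 := h ⟨(y:ℕ)-1, hy⟩ x
    rw [dd_swap _ _ _ _ hxy, dd_L _ _ _ _ _ hab hbc] at h1
    have g1 := ind12 h1 (by (try simp only [Fin.val_mk]); omega)
    try simp only [Fin.val_mk] at g1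
    omega
  · intro hc i j
    rw [dd_swap _ _ _ _ hxy, dd_L _ _ _ _ _ hab hbc]
    split_ifs <;> omega

lemma le_Rt {a b c p q : Fin n} (hab : (a:ℕ) < b) (hbc : (b:ℕ) < c) (hpq : (p:ℕ) < q) :
    bruhatLE (Rc a b c) (Equiv.swap p q) ↔ ((p:ℕ) ≤ a ∧ (c:ℕ) ≤ q) := by
  rw [bruhat_iff_dd]
  constructor
  · intro h
    have hy : (c:ℕ) - 1 < n := lt_of_le_of_lt (Nat.sub_le _ _) c.isLt
    have h1 := h ⟨(c:ℕ)-1, hy⟩ a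
    rw [dd_swap _ _ _ _ hpq, dd_R _ _ _ _ _ hab hbc] at h1
    have g1 := ind21 h1 (by (try simp only [Fin.val_mk]); omega)
    try simp only [Fin.val_mk] at g1
    omega
  · intro hc i j
    rw [dd_swap _ _ _ _ hpq, dd_R _ _ _ _ _ hab hbc]
    split_ifs <;> omega

lemma le_Lt {a b c p q : Fin n} (hab : (a:ℕ) < b) (hbc : (b:ℕ) < c) (hpq : (p:ℕ) < q) :
    bruhatLE (Lc a b c) (Equiv.swap p q) ↔ ((p:ℕ) ≤ a ∧ (c:ℕ) ≤ q) := by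
  rw [bruhat_iff_dd]
  constructor
  · intro h
    have hy : (c:ℕ) - 1 < n := lt_of_le_of_lt (Nat.sub_le _ _) c.isLt
    have h1 := h a ⟨(c:ℕ)-1, hy⟩
    rw [dd_swap _ _ _ _ hpq, dd_L _ _ _ _ _ hab hbc] at h1
    have g1 := ind21 h1 (by (try simp only [Fin.val_mk]); omega)
    try simp only [Fin.val_mk] at g1
    omega
  · intro hc i j
    rw [dd_swap _ _ _ _ hpq, dd_L _ _ _ _ _ hab hbc]
    split_ifs <;> omega

set_option maxHeartbeats 2000000 in
lemma le_RR {a b c p q r : Fin n} (hab : (a:ℕ) < b) (hbc : (b:ℕ) < c)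
    (hpq : (p:ℕ) < q) (hqr : (q:ℕ) < r) :
    bruhatLE (Rc a b c) (Rc p q r) ↔
      ((p:ℕ) ≤ a ∧ ((c:ℕ) ≤ q ∨ ((q:ℕ) ≤ a ∧ (c:ℕ) ≤ r) ∨ ((q:ℕ) = b ∧ (c:ℕ) ≤ r))) := by
  rw [bruhat_iff_dd]
  constructor
  · intro h
    have hc1 : (c:ℕ) - 1 < n := lt_of_le_of_lt (Nat.sub_le _ _) c.isLt
    have hb1 : (b:ℕ) - 1 < n := lt_of_le_of_lt (Nat.sub_le _ _) b.isLt
    have h1 := h a a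
    rw [dd_R _ _ _ _ _ hab hbc, dd_R _ _ _ _ _ hpq hqr] at h1
    have g1 := ind22 h1 (by (try simp only [Fin.val_mk]); omega)
    clear h1
    have h2 := h ⟨(c:ℕ)-1, hc1⟩ a
    rw [dd_R _ _ _ _ _ hab hbc, dd_R _ _ _ _ _ hpq hqr] at h2
    have g2 := ind22 h2 (by (try simp only [Fin.val_mk]); omega)
    clear h2
    have h3 := h a ⟨(b:ℕ)-1, hb1⟩
    rw [dd_R _ _ _ _ _ hab hbc, dd_R _ _ _ _ _ hpq hqr] at h3
    have g3 := ind22 h3 (by (try simp only [Fin.val_mk]); omega)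
    clear h3
    have h4 := h b ⟨(c:ℕ)-1, hc1⟩
    rw [dd_R _ _ _ _ _ hab hbc, dd_R _ _ _ _ _ hpq hqr] at h4
    have g4 := ind22 h4 (by (try simp only [Fin.val_mk]); omega)
    clear h4
    try simp only [Fin.val_mk] at g1
    try simp only [Fin.val_mk] at g2
    try simp only [Fin.val_mk] at g3
    try simp only [Fin.val_mk] at g4
    omega
  · intro hc i j
    rw [dd_R _ _ _ _ _ hab hbc, dd_R _ _ _ _ _ hpq hqr]
    split_ifs <;> omega

set_option maxHeartbeats 2000000 in
lemma le_LL {a b c p q r : Fin n} (hab : (a:ℕ) < b) (hbc : (b:ℕ) < c)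
    (hpq : (p:ℕ) < q) (hqr : (q:ℕ) < r) :
    bruhatLE (Lc a b c) (Lc p q r) ↔
      ((p:ℕ) ≤ a ∧ ((c:ℕ) ≤ q ∨ ((q:ℕ) ≤ a ∧ (c:ℕ) ≤ r) ∨ ((q:ℕ) = b ∧ (c:ℕ) ≤ r))) := by
  rw [bruhat_iff_dd]
  constructor
  · intro h
    have hc1 : (c:ℕ) - 1 < n := lt_of_le_of_lt (Nat.sub_le _ _) c.isLt
    have hb1 : (b:ℕ) - 1 < n := lt_of_le_of_lt (Nat.sub_le _ _) b.isLt
    have h1 := h a a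
    rw [dd_L _ _ _ _ _ hab hbc, dd_L _ _ _ _ _ hpq hqr] at h1
    have g1 := ind22 h1 (by (try simp only [Fin.val_mk]); omega)
    clear h1
    have h2 := h a ⟨(c:ℕ)-1, hc1⟩
    rw [dd_L _ _ _ _ _ hab hbc, dd_L _ _ _ _ _ hpq hqr] at h2
    have g2 := ind22 h2 (by (try simp only [Fin.val_mk]); omega)
    clear h2
    have h3 := h ⟨(b:ℕ)-1, hb1⟩ a
    rw [dd_L _ _ _ _ _ hab hbc, dd_L _ _ _ _ _ hpq hqr] at h3
    have g3 := ind22 h3 (by (try simp only [Fin.val_mk]); omega)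
    clear h3
    have h4 := h ⟨(c:ℕ)-1, hc1⟩ b
    rw [dd_L _ _ _ _ _ hab hbc, dd_L _ _ _ _ _ hpq hqr] at h4
    have g4 := ind22 h4 (by (try simp only [Fin.val_mk]); omega)
    clear h4
    try simp only [Fin.val_mk] at g1
    try simp only [Fin.val_mk] at g2
    try simp only [Fin.val_mk] at g3
    try simp only [Fin.val_mk] at g4
    omega
  · intro hc i j
    rw [dd_L _ _ _ _ _ hab hbc, dd_L _ _ _ _ _ hpq hqr]
    split_ifs <;> omega

lemma le_RL {a b c p q r : Fin n} (hab : (a:ℕ) < b) (hbc : (b:ℕ) < c)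
    (hpq : (p:ℕ) < q) (hqr : (q:ℕ) < r) :
    bruhatLE (Rc a b c) (Lc p q r) ↔
      ((p:ℕ) ≤ a ∧ (c:ℕ) ≤ r ∧ ((c:ℕ) ≤ q ∨ (q:ℕ) ≤ a)) := by
  rw [bruhat_iff_dd]
  constructor
  · intro h
    have hc1 : (c:ℕ) - 1 < n := lt_of_le_of_lt (Nat.sub_le _ _) c.isLt
    have h1 := h a a
    rw [dd_R _ _ _ _ _ hab hbc, dd_L _ _ _ _ _ hpq hqr] at h1
    have g1 := ind22 h1 (by (try simp only [Fin.val_mk]); omega)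
    clear h1
    have h2 := h ⟨(c:ℕ)-1, hc1⟩ a
    rw [dd_R _ _ _ _ _ hab hbc, dd_L _ _ _ _ _ hpq hqr] at h2
    have g2 := ind22 h2 (by (try simp only [Fin.val_mk]); omega)
    clear h2
    try simp only [Fin.val_mk] at g1
    try simp only [Fin.val_mk] at g2
    omega
  · intro hc i j
    rw [dd_R _ _ _ _ _ hab hbc, dd_L _ _ _ _ _ hpq hqr]
    split_ifs <;> omega

lemma le_LR {a b c p q r : Fin n} (hab : (a:ℕ) < b) (hbc : (b:ℕ) < c)
    (hpq : (p:ℕ) < q) (hqr : (q:ℕ) < r) :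
    bruhatLE (Lc a b c) (Rc p q r) ↔
      ((p:ℕ) ≤ a ∧ (c:ℕ) ≤ r ∧ ((c:ℕ) ≤ q ∨ (q:ℕ) ≤ a)) := by
  rw [bruhat_iff_dd]
  constructor
  · intro h
    have hc1 : (c:ℕ) - 1 < n := lt_of_le_of_lt (Nat.sub_le _ _) c.isLt
    have h1 := h a a
    rw [dd_L _ _ _ _ _ hab hbc, dd_R _ _ _ _ _ hpq hqr] at h1
    have g1 := ind22 h1 (by (try simp only [Fin.val_mk]); omega)
    clear h1
    have h2 := h a ⟨(c:ℕ)-1, hc1⟩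
    rw [dd_L _ _ _ _ _ hab hbc, dd_R _ _ _ _ _ hpq hqr] at h2
    have g2 := ind22 h2 (by (try simp only [Fin.val_mk]); omega)
    clear h2
    try simp only [Fin.val_mk] at g1
    try simp only [Fin.val_mk] at g2
    omega
  · intro hc i j
    rw [dd_L _ _ _ _ _ hab hbc, dd_R _ _ _ _ _ hpq hqr]
    split_ifs <;> omega


lemma swap_eq_swap {x y p q : Fin n} (hxy : (x:ℕ) < y) (hpq : (p:ℕ) < q)
    (h : Equiv.swap x y = Equiv.swap p q) : (x:ℕ) = p ∧ (y:ℕ) = q := by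
  have e := Equiv.ext_iff.mp h
  have h1 : Equiv.swap x y p = q := by rw [e p]; exact Equiv.swap_apply_left p q
  have h2 : Equiv.swap x y q = p := by rw [e q]; exact Equiv.swap_apply_right p q
  have h1' := congrArg Fin.val h1
  have h2' := congrArg Fin.val h2
  rw [swap_val] at h1' h2'
  split_ifs at h1' h2' <;> omega

lemma swap_ne_R {x y a b c : Fin n} (hxy : (x:ℕ) < y) (hab : (a:ℕ) < b) (hbc : (b:ℕ) < c)
    (h : Equiv.swap x y = Rc a b c) : False := by
  obtain ⟨ea, eb, ec⟩ := Rc_abc a b c hab hbc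
  have h1 : Equiv.swap x y a = b := by rw [h]; exact ea
  have h2 : Equiv.swap x y c = a := by rw [h]; exact ec
  have h1' := congrArg Fin.val h1
  have h2' := congrArg Fin.val h2
  rw [swap_val] at h1' h2'
  split_ifs at h1' h2' <;> omega

lemma swap_ne_L {x y a b c : Fin n} (hxy : (x:ℕ) < y) (hab : (a:ℕ) < b) (hbc : (b:ℕ) < c)
    (h : Equiv.swap x y = Lc a b c) : False := by
  obtain ⟨ea, eb, ec⟩ := Lc_abc a b c hab hbc
  have h1 : Equiv.swap x y a = c := by rw [h]; exact ea
  have h2 : Equiv.swap x y b = a := by rw [h]; exact eb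
  have h1' := congrArg Fin.val h1
  have h2' := congrArg Fin.val h2
  rw [swap_val] at h1' h2'
  split_ifs at h1' h2' <;> omega

lemma Rc_eq_Rc {a b c p q r : Fin n} (hab : (a:ℕ) < b) (hbc : (b:ℕ) < c)
    (hpq : (p:ℕ) < q) (hqr : (q:ℕ) < r)
    (h : Rc a b c = Rc p q r) : (a:ℕ) = p ∧ (b:ℕ) = q ∧ (c:ℕ) = r := by
  obtain ⟨ea, eb, ec⟩ := Rc_abc a b c hab hbc
  obtain ⟨fa, fb, fc⟩ := Rc_abc p q r hpq hqr
  have h1 : Rc p q r a = b := by rw [← h]; exact ea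
  have h2 : Rc p q r b = c := by rw [← h]; exact eb
  have h4 : Rc a b c p = q := by rw [h]; exact fa
  have h1' := congrArg Fin.val h1
  have h2' := congrArg Fin.val h2
  have h4' := congrArg Fin.val h4
  rw [Rc_val _ _ _ _ hpq hqr] at h1' h2'
  rw [Rc_val _ _ _ _ hab hbc] at h4'
  split_ifs at h1' h2' h4' <;> omega

lemma Lc_eq_Lc {a b c p q r : Fin n} (hab : (a:ℕ) < b) (hbc : (b:ℕ) < c)
    (hpq : (p:ℕ) < q) (hqr : (q:ℕ) < r)
    (h : Lc a b c = Lc p q r) : (a:ℕ) = p ∧ (b:ℕ) = q ∧ (c:ℕ) = r := by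
  obtain ⟨ea, eb, ec⟩ := Lc_abc a b c hab hbc
  obtain ⟨fa, fb, fc⟩ := Lc_abc p q r hpq hqr
  have h1 : Lc p q r a = c := by rw [← h]; exact ea
  have h2 : Lc p q r b = a := by rw [← h]; exact eb
  have h4 : Lc a b c p = r := by rw [h]; exact fa
  have h1' := congrArg Fin.val h1
  have h2' := congrArg Fin.val h2
  have h4' := congrArg Fin.val h4
  rw [Lc_val _ _ _ _ hpq hqr] at h1' h2'
  rw [Lc_val _ _ _ _ hab hbc] at h4'
  split_ifs at h1' h2' h4' <;> omega

lemma Rc_ne_Lc {a b c p q r : Fin n} (hab : (a:ℕ) < b) (hbc : (b:ℕ) < c)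
    (hpq : (p:ℕ) < q) (hqr : (q:ℕ) < r)
    (h : Rc a b c = Lc p q r) : False := by
  obtain ⟨ea, eb, ec⟩ := Rc_abc a b c hab hbc
  have h1 : Lc p q r a = b := by rw [← h]; exact ea
  have h2 : Lc p q r c = a := by rw [← h]; exact ec
  have h1' := congrArg Fin.val h1
  have h2' := congrArg Fin.val h2
  rw [Lc_val _ _ _ _ hpq hqr] at h1' h2'
  split_ifs at h1' h2' <;> omega

lemma c23_t {x y : Fin n} (h : (x:ℕ) < y) : inC23 (Equiv.swap x y) :=
  Or.inl ⟨x, y, Fin.lt_def.mpr h, rfl⟩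

lemma c23_R {a b c : Fin n} (h1 : (a:ℕ) < b) (h2 : (b:ℕ) < c) : inC23 (Rc a b c) :=
  Or.inr ⟨a, b, c, Fin.lt_def.mpr h1, Fin.lt_def.mpr h2, Or.inl rfl⟩

lemma c23_L {a b c : Fin n} (h1 : (a:ℕ) < b) (h2 : (b:ℕ) < c) : inC23 (Lc a b c) :=
  Or.inr ⟨a, b, c, Fin.lt_def.mpr h1, Fin.lt_def.mpr h2, Or.inr rfl⟩

lemma mem_derived {A : Set (Equiv.Perm (Fin n))} {i j : Fin n} {σ : Equiv.Perm (Fin n)} :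
    σ ∈ derivedSet A i j ↔ σ ∈ A ∧ σ ≠ Equiv.swap i j ∧ (∀ k, j < k → σ ≠ Lc i j k) ∧
      (∀ k, i < k → k < j → σ ≠ Rc i k j) := by
  unfold derivedSet
  simp only [Set.mem_diff, Set.mem_union, Set.mem_singleton_iff, Set.mem_setOf_eq, not_or,
    not_exists]
  constructor
  · rintro ⟨hA, hn⟩
    push_neg at hn
    exact ⟨hA, hn.1.1, hn.1.2, hn.2⟩
  · rintro ⟨hA, h1, h2, h3⟩
    refine ⟨hA, ?_⟩
    push_neg
    exact ⟨⟨h1, h2⟩, h3⟩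

/-- the derived set is admissible, and T_{i,j-1} is a wedge for it. -/
theorem derivedSet_admissible (n : ℕ) (A : Set (Equiv.Perm (Fin n)))
    (hA : admissible A) (i j : Fin n) (hw : isWedge A i j) :
    admissible (derivedSet A i j) ∧
    (∀ j' : Fin n, (j' : ℕ) + 1 = (j : ℕ) → i < j' → isWedge (derivedSet A i j) i j') := by
  obtain ⟨hC, hDC, hA3, hA4⟩ := hA
  obtain ⟨hij, hTij, hW1, hW2⟩ := hw
  have hin : (i:ℕ) < (j:ℕ) := hij
  have him : (i:ℕ) - 1 < n := lt_of_le_of_lt (Nat.sub_le _ _) i.isLt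
  have wedgeL : ∀ σ ∈ A, 0 < (i:ℕ) → bruhatLE (Equiv.swap ⟨(i:ℕ)-1, him⟩ i) σ → False := by
    intro σ hσ hi hle
    refine hW1 ⟨(i:ℕ)-1, him⟩ ?_ (hDC σ hσ _ (c23_t ?_) hle)
    · simp only [Fin.val_mk]; omega
    · simp only [Fin.val_mk]; omega
  have wedgeR : ∀ σ ∈ A, ∀ (hj1 : (j:ℕ)+1 < n), bruhatLE (Rc i j ⟨(j:ℕ)+1, hj1⟩) σ → False := by
    intro σ hσ hj1 hle
    refine hW2 ⟨(j:ℕ)+1, hj1⟩ ?_ (hDC σ hσ _ (c23_R hin ?_) hle)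
    · simp only [Fin.val_mk]
    · simp only [Fin.val_mk]; omega
  have key : ∀ σ ∈ derivedSet A i j, ∀ τ : Equiv.Perm (Fin n),
      (τ = Equiv.swap i j ∨ (∃ k, j < k ∧ τ = Lc i j k) ∨
        (∃ k, i < k ∧ k < j ∧ τ = Rc i k j)) →
      bruhatLE τ σ → False := by
    intro σ hσD τ hform hle
    obtain ⟨hσA, hne1, hne2, hne3⟩ := mem_derived.mp hσD
    rcases hC σ hσA with ⟨p, q, hpq0, rfl⟩ | ⟨a, b, c, hab0, hbc0, hRL⟩
    · -- σ is a transposition swap p q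
      have hpq : (p:ℕ) < q := hpq0
      rcases hform with rfl | ⟨k, hjk0, rfl⟩ | ⟨k, hik0, hkj0, rfl⟩
      · -- τ = swap i j
        have harr := (le_tt hin hpq).mp hle
        by_cases hp : (p:ℕ) < i
        · exact wedgeL _ hσA (by omega)
            ((le_tt (by simp only [Fin.val_mk]; omega) hpq).mpr
              (by simp only [Fin.val_mk]; omega))
        · by_cases hq : (j:ℕ) < q
          · have hj1 : (j:ℕ)+1 < n := by have := q.isLt; omega
            exact wedgeR _ hσA hj1
              ((le_Rt hin (by simp only [Fin.val_mk]; omega) hpq).mpr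
                (by simp only [Fin.val_mk]; omega))
          · have hpi : i = p := Fin.ext (by omega)
            have hqj : j = q := Fin.ext (by omega)
            subst hpi; subst hqj
            exact hne1 rfl
      · -- τ = Lc i j k
        have hjk : (j:ℕ) < k := hjk0
        have harr := (le_Lt hin hjk hpq).mp hle
        have hj1 : (j:ℕ)+1 < n := by have := k.isLt; omega
        exact wedgeR _ hσA hj1
          ((le_Rt hin (by simp only [Fin.val_mk]; omega) hpq).mpr
            (by simp only [Fin.val_mk]; omega))
      · -- τ = Rc i k j
        have hik : (i:ℕ) < k := hik0
        have hkj : (k:ℕ) < j := hkj0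
        have harr := (le_Rt hik hkj hpq).mp hle
        by_cases hp : (p:ℕ) < i
        · exact wedgeL _ hσA (by omega)
            ((le_tt (by simp only [Fin.val_mk]; omega) hpq).mpr
              (by simp only [Fin.val_mk]; omega))
        · by_cases hq : (j:ℕ) < q
          · have hj1 : (j:ℕ)+1 < n := by have := q.isLt; omega
            exact wedgeR _ hσA hj1
              ((le_Rt hin (by simp only [Fin.val_mk]; omega) hpq).mpr
                (by simp only [Fin.val_mk]; omega))
          · have hpi : i = p := Fin.ext (by omega)
            have hqj : j = q := Fin.ext (by omega)
            subst hpi; subst hqj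
            exact hne1 rfl
    · -- σ is a 3-cycle
      have hab : (a:ℕ) < b := hab0
      have hbc : (b:ℕ) < c := hbc0
      rcases hRL with rfl | rfl
      · -- σ = Rc a b c
        rcases hform with rfl | ⟨k, hjk0, rfl⟩ | ⟨k, hik0, hkj0, rfl⟩
        · -- τ = swap i j ≤ Rc a b c
          rcases (le_tR hin hab hbc).mp hle with ⟨h1, h2⟩ | ⟨h1, h2⟩
          · have hj1 : (j:ℕ)+1 < n := by have := c.isLt; omega
            exact wedgeR _ hσA hj1
              ((le_RR hin (by simp only [Fin.val_mk]; omega) hab hbc).mpr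
                (by simp only [Fin.val_mk]; omega))
          · exact wedgeL _ hσA (by omega)
              ((le_tR (by simp only [Fin.val_mk]; omega) hab hbc).mpr
                (by simp only [Fin.val_mk]; omega))
        · -- τ = Lc i j k ≤ Rc a b c
          have hjk : (j:ℕ) < k := hjk0
          obtain ⟨h1, h2, h3⟩ := (le_LR hin hjk hab hbc).mp hle
          rcases h3 with h3 | h3
          · have hj1 : (j:ℕ)+1 < n := by have := c.isLt; omega
            exact wedgeR _ hσA hj1
              ((le_RR hin (by simp only [Fin.val_mk]; omega) hab hbc).mpr
                (by simp only [Fin.val_mk]; omega))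
          · exact wedgeL _ hσA (by omega)
              ((le_tR (by simp only [Fin.val_mk]; omega) hab hbc).mpr
                (by simp only [Fin.val_mk]; omega))
        · -- τ = Rc i k j ≤ Rc a b c
          have hik : (i:ℕ) < k := hik0
          have hkj : (k:ℕ) < j := hkj0
          obtain ⟨h1, h2⟩ := (le_RR hik hkj hab hbc).mp hle
          rcases h2 with h2 | ⟨h2, h3⟩ | ⟨h2, h3⟩
          · -- j ≤ b
            have hj1 : (j:ℕ)+1 < n := by have := c.isLt; omega
            exact wedgeR _ hσA hj1
              ((le_RR hin (by simp only [Fin.val_mk]; omega) hab hbc).mpr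
                (by simp only [Fin.val_mk]; omega))
          · -- b ≤ i ∧ j ≤ c
            exact wedgeL _ hσA (by omega)
              ((le_tR (by simp only [Fin.val_mk]; omega) hab hbc).mpr
                (by simp only [Fin.val_mk]; omega))
          · -- b = k ∧ j ≤ c
            by_cases hai : (a:ℕ) < i
            · exact wedgeL _ hσA (by omega)
                ((le_tR (by simp only [Fin.val_mk]; omega) hab hbc).mpr
                  (by simp only [Fin.val_mk]; omega))
            · by_cases hjc : (j:ℕ) < c
              · have hj1 : (j:ℕ)+1 < n := by have := c.isLt; omega
                have hTjc : Equiv.swap j c ∈ A :=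
                  hDC _ hσA _ (c23_t hjc) ((le_tR hjc hab hbc).mpr (by omega))
                rcases hA4 i j c hij (Fin.lt_def.mpr hjc) hTij hTjc with hRA | hLA
                · have e1 : (j:ℕ) < (((⟨(j:ℕ)+1, hj1⟩ : Fin n)) : ℕ) :=
                    Nat.lt_succ_self _
                  have e2 : (i:ℕ) ≤ (i:ℕ) ∧
                      ((((⟨(j:ℕ)+1, hj1⟩ : Fin n)) : ℕ) ≤ (j:ℕ) ∨
                        ((j:ℕ) ≤ (i:ℕ) ∧ (((⟨(j:ℕ)+1, hj1⟩ : Fin n)) : ℕ) ≤ (c:ℕ)) ∨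
                        ((j:ℕ) = (j:ℕ) ∧ (((⟨(j:ℕ)+1, hj1⟩ : Fin n)) : ℕ) ≤ (c:ℕ))) :=
                    ⟨le_refl _, Or.inr (Or.inr ⟨rfl, hjc⟩)⟩
                  exact wedgeR _ hRA hj1 ((le_RR hin e1 hin hjc).mpr e2)
                · have haI : i = a := Fin.ext (by omega)
                  have hbK : k = b := Fin.ext (by omega)
                  subst haI; subst hbK
                  have hTic : Equiv.swap i c ∈ A :=
                    hA3 i k j c hik (Fin.lt_def.mpr (by omega)) hij (Fin.lt_def.mpr hjc)
                      hσA hLA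
                  exact wedgeR _ hTic hj1
                    ((le_Rt hin (by simp only [Fin.val_mk]; omega)
                      (by omega : (i:ℕ) < c)).mpr (by simp only [Fin.val_mk]; omega))
              · have haI : i = a := Fin.ext (by omega)
                have hbK : k = b := Fin.ext (by omega)
                have hcJ : j = c := Fin.ext (by omega)
                subst haI; subst hbK; subst hcJ
                exact hne3 k hik0 hkj0 rfl
      · -- σ = Lc a b c
        rcases hform with rfl | ⟨k, hjk0, rfl⟩ | ⟨k, hik0, hkj0, rfl⟩
        · -- τ = swap i j ≤ Lc a b c
          rcases (le_tL hin hab hbc).mp hle with ⟨h1, h2⟩ | ⟨h1, h2⟩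
          · by_cases hai : (a:ℕ) < i
            · exact wedgeL _ hσA (by omega)
                ((le_tL (by simp only [Fin.val_mk]; omega) hab hbc).mpr
                  (by simp only [Fin.val_mk]; omega))
            · by_cases hjb : (j:ℕ) < b
              · have hj1 : (j:ℕ)+1 < n := by have := c.isLt; omega
                exact wedgeR _ hσA hj1
                  ((le_RL hin (by simp only [Fin.val_mk]; omega) hab hbc).mpr
                    (by simp only [Fin.val_mk]; omega))
              · have haI : i = a := Fin.ext (by omega)
                have hbJ : j = b := Fin.ext (by omega)
                subst haI; subst hbJ
                exact hne2 c (Fin.lt_def.mpr (by omega)) rfl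
          · exact wedgeL _ hσA (by omega)
              ((le_tL (by simp only [Fin.val_mk]; omega) hab hbc).mpr
                (by simp only [Fin.val_mk]; omega))
        · -- τ = Lc i j k ≤ Lc a b c
          have hjk : (j:ℕ) < k := hjk0
          obtain ⟨h1, h2⟩ := (le_LL hin hjk hab hbc).mp hle
          rcases h2 with h2 | ⟨h2, h3⟩ | ⟨h2, h3⟩
          · -- k ≤ b
            have hj1 : (j:ℕ)+1 < n := by have := c.isLt; omega
            exact wedgeR _ hσA hj1
              ((le_RL hin (by simp only [Fin.val_mk]; omega) hab hbc).mpr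
                (by simp only [Fin.val_mk]; omega))
          · -- b ≤ i ∧ k ≤ c
            exact wedgeL _ hσA (by omega)
              ((le_tL (by simp only [Fin.val_mk]; omega) hab hbc).mpr
                (by simp only [Fin.val_mk]; omega))
          · -- b = j ∧ k ≤ c
            by_cases hai : (a:ℕ) < i
            · exact wedgeL _ hσA (by omega)
                ((le_tL (by simp only [Fin.val_mk]; omega) hab hbc).mpr
                  (by simp only [Fin.val_mk]; omega))
            · have haI : i = a := Fin.ext (by omega)
              have hbJ : j = b := Fin.ext (by omega)
              subst haI; subst hbJ
              exact hne2 c (Fin.lt_def.mpr (by omega)) rfl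
        · -- τ = Rc i k j ≤ Lc a b c
          have hik : (i:ℕ) < k := hik0
          have hkj : (k:ℕ) < j := hkj0
          obtain ⟨h1, h2, h3⟩ := (le_RL hik hkj hab hbc).mp hle
          rcases h3 with h3 | h3
          · -- j ≤ b
            by_cases hai : (a:ℕ) < i
            · exact wedgeL _ hσA (by omega)
                ((le_tL (by simp only [Fin.val_mk]; omega) hab hbc).mpr
                  (by simp only [Fin.val_mk]; omega))
            · by_cases hjb : (j:ℕ) < b
              · have hj1 : (j:ℕ)+1 < n := by have := c.isLt; omega
                exact wedgeR _ hσA hj1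
                  ((le_RL hin (by simp only [Fin.val_mk]; omega) hab hbc).mpr
                    (by simp only [Fin.val_mk]; omega))
              · have haI : i = a := Fin.ext (by omega)
                have hbJ : j = b := Fin.ext (by omega)
                subst haI; subst hbJ
                exact hne2 c (Fin.lt_def.mpr (by omega)) rfl
          · -- b ≤ i
            exact wedgeL _ hσA (by omega)
              ((le_tL (by simp only [Fin.val_mk]; omega) hab hbc).mpr
                (by simp only [Fin.val_mk]; omega))
  refine ⟨⟨fun τ hτ => hC τ hτ.1, ?_, ?_, ?_⟩, ?_⟩
  · -- downward closure
    intro σ hσ τ hτC hle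
    have hτA : τ ∈ A := hDC σ hσ.1 τ hτC hle
    rw [mem_derived]
    refine ⟨hτA, ?_, ?_, ?_⟩
    · intro he; exact key σ hσ τ (Or.inl he) hle
    · intro k hk he; exact key σ hσ τ (Or.inr (Or.inl ⟨k, hk, he⟩)) hle
    · intro k h1 h2 he; exact key σ hσ τ (Or.inr (Or.inr ⟨k, h1, h2, he⟩)) hle
  · -- axiom A3
    intro x y z w hxy hyw hxz hzw hRD hLD
    have hRm := mem_derived.mp hRD
    have hLm := mem_derived.mp hLD
    have hxy' : (x:ℕ) < y := hxy
    have hyw' : (y:ℕ) < w := hyw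
    have hxz' : (x:ℕ) < z := hxz
    have hzw' : (z:ℕ) < w := hzw
    have hT : Equiv.swap x w ∈ A := hA3 x y z w hxy hyw hxz hzw hRm.1 hLm.1
    rw [mem_derived]
    refine ⟨hT, ?_, ?_, ?_⟩
    · intro he
      obtain ⟨e1, e2⟩ := swap_eq_swap (by omega) hin he
      have hxI : i = x := Fin.ext e1.symm
      have hwJ : j = w := Fin.ext e2.symm
      subst hxI; subst hwJ
      exact hRm.2.2.2 y hxy hyw rfl
    · intro k hk he
      exact swap_ne_L (by omega) hin (Fin.lt_def.mp hk) he
    · intro k h1 h2 he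
      exact swap_ne_R (by omega) (Fin.lt_def.mp h1) (Fin.lt_def.mp h2) he
  · -- axiom A4
    intro x y z hxy hyz hxD hyD
    have hxm := mem_derived.mp hxD
    have hym := mem_derived.mp hyD
    have hxy' : (x:ℕ) < y := hxy
    have hyz' : (y:ℕ) < z := hyz
    rcases hA4 x y z hxy hyz hxm.1 hym.1 with hR | hL
    · by_cases hS : Rc x y z ∈ derivedSet A i j
      · exact Or.inl hS
      · have hP2 : Rc x y z ≠ Equiv.swap i j := fun he => swap_ne_R hin hxy' hyz' he.symm
        have hP3 : ∀ k, j < k → Rc x y z ≠ Lc i j k := fun k hk he =>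
          Rc_ne_Lc hxy' hyz' hin (Fin.lt_def.mp hk) he
        have hP4 : ¬ (∀ k, i < k → k < j → Rc x y z ≠ Rc i k j) := fun h4 =>
          hS (mem_derived.mpr ⟨hR, hP2, hP3, h4⟩)
        push_neg at hP4
        obtain ⟨k, hik1, hkj1, heq⟩ := hP4
        obtain ⟨e1, e2, e3⟩ := Rc_eq_Rc hxy' hyz' (Fin.lt_def.mp hik1) (Fin.lt_def.mp hkj1) heq
        have hxI : i = x := Fin.ext e1.symm
        have hzJ : j = z := Fin.ext e3.symm
        subst hxI; subst hzJ
        right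
        rw [mem_derived]
        refine ⟨hDC _ hTij _ (c23_L hxy' hyz') ((le_Lt hxy' hyz' hin).mpr (by omega)),
          ?_, ?_, ?_⟩
        · exact fun he => swap_ne_L hin hxy' hyz' he.symm
        · intro k' hk' he
          obtain ⟨_, e, _⟩ := Lc_eq_Lc hxy' hyz' hin (Fin.lt_def.mp hk') he
          omega
        · intro k' h1 h2 he
          exact Rc_ne_Lc (Fin.lt_def.mp h1) (Fin.lt_def.mp h2) hxy' hyz' he.symm
    · by_cases hS : Lc x y z ∈ derivedSet A i j
      · exact Or.inr hS
      · have hP2 : Lc x y z ≠ Equiv.swap i j := fun he => swap_ne_L hin hxy' hyz' he.symm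
        have hP4 : ∀ k, i < k → k < j → Lc x y z ≠ Rc i k j := fun k h1 h2 he =>
          Rc_ne_Lc (Fin.lt_def.mp h1) (Fin.lt_def.mp h2) hxy' hyz' he.symm
        have hP3 : ¬ (∀ k, j < k → Lc x y z ≠ Lc i j k) := fun h3 =>
          hS (mem_derived.mpr ⟨hL, hP2, h3, hP4⟩)
        push_neg at hP3
        obtain ⟨k, hk, heq⟩ := hP3
        obtain ⟨e1, e2, _⟩ := Lc_eq_Lc hxy' hyz' hin (Fin.lt_def.mp hk) heq
        have hxI : x = i := Fin.ext e1
        have hyJ : y = j := Fin.ext e2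
        exact absurd (by rw [hxI, hyJ]) hxm.2.1
  · -- the new wedge
    intro j' hj' hij'
    have hij'v : (i:ℕ) < j' := hij'
    refine ⟨hij', ?_, ?_, ?_⟩
    · rw [mem_derived]
      refine ⟨hDC _ hTij _ (c23_t hij'v) ((le_tt hij'v hin).mpr (by omega)), ?_, ?_, ?_⟩
      · intro he
        obtain ⟨e1, e2⟩ := swap_eq_swap hij'v hin he
        omega
      · intro k hk he
        exact swap_ne_L hij'v hin (Fin.lt_def.mp hk) he
      · intro k h1 h2 he
        exact swap_ne_R hij'v (Fin.lt_def.mp h1) (Fin.lt_def.mp h2) he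
    · intro i'' hi'' hmem
      exact hW1 i'' hi'' hmem.1
    · intro j'' hj'' hmem
      have hjj : j = j'' := Fin.ext (by omega)
      subst hjj
      exact (mem_derived.mp hmem).2.2.2 j' hij' (Fin.lt_def.mpr (by omega)) rfl

end SmoothPerm
end

section
/- Let A ⊆ C^{2,3} be admissible, ≺ a compatible order for A, and suppose r_1 < r_2 < s_2 and s_1 > r_1 are such that T_{r_1,s_1}, T_{r_1,s_2} ∈ A, T_{r_1,s_2} covers T_{r_1,s_1} in ≺, and T_{r_2,s_2} covers T_{r_1,s_2} in ≺. Then s_1 = r_2. -/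
/-!
Write `Tᵢⱼ` for `swap i j`. By downward closure in Bruhat order, `Tᵢₖ ∈ A` forces `Tᵢⱼ, Tⱼₖ ∈ A`
for `i < j < k`, and compatibility then places `Tᵢₖ` strictly between them. Suppose `s₁ ≠ r₂`.
Since `T_{r₁s₂} ≺ T_{r₂s₂}`, betweenness gives `T_{r₁r₂} ≺ T_{r₁s₂}`, and as `T_{r₁s₂}` covers
`T_{r₁s₁}` we get `T_{r₁r₂} ≺ T_{r₁s₁}`. If `r₂ < s₁`, betweenness puts `T_{r₂s₁}` strictly between
`T_{r₁s₁}` and `T_{r₂s₂}`, so the two covers force `T_{r₂s₁} = T_{r₁s₂}`, which is absurd.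
If `s₁ < r₂`, betweenness closes the cycle
`T_{r₁s₁} ≺ T_{r₁s₂} ≺ T_{r₂s₂} ≺ T_{s₁s₂} ≺ T_{s₁r₂} ≺ T_{r₁r₂} ≺ T_{r₁s₁}`.
-/

namespace SmoothPerm

variable {n : ℕ}

open Equiv Finset

theorem card_filter_swap_add {a b : Fin n} (hab : a < b) (i j : Fin n) :
    #{x | x ≤ i ∧ swap a b x ≤ j} + (if a ≤ i ∧ i < b ∧ a ≤ j ∧ j < b then 1 else 0) =
      #{x : Fin n | x ≤ i ∧ x ≤ j} := by
  have hb : b ∈ (univ : Finset (Fin n)).erase a := mem_erase.2 ⟨hab.ne', mem_univ b⟩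
  simp only [card_filter]
  rw [← add_sum_erase _ _ (mem_univ a), ← add_sum_erase _ _ hb,
    ← add_sum_erase _ _ (mem_univ a), ← add_sum_erase _ _ hb,
    sum_congr rfl fun x hx => by
      rw [swap_apply_of_ne_of_ne (ne_of_mem_erase (mem_of_mem_erase hx)) (ne_of_mem_erase hx)]]
  simp only [swap_apply_left, swap_apply_right]
  split_ifs <;> omega

theorem bruhatLE_swap_swap {a b c d : Fin n} (hca : c ≤ a) (hab : a < b) (hbd : b ≤ d) :
    bruhatLE (swap a b) (swap c d) := by
  intro i j
  have hab' := card_filter_swap_add hab i j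
  have hcd' := card_filter_swap_add (hca.trans_lt (hab.trans_le hbd)) i j
  split_ifs at hab' hcd' <;> omega

theorem swap_eq_swap_iff {a b c d : Fin n} (hab : a < b) (hcd : c < d) :
    swap a b = swap c d ↔ a = c ∧ b = d := by
  refine ⟨fun h => ?_, fun ⟨hac, hbd⟩ => hac ▸ hbd ▸ rfl⟩
  have moved : ∀ x, swap a b x ≠ x → x = c ∨ x = d := fun x hx =>
    (swap_apply_ne_self_iff.1 (h ▸ hx)).2
  have ha := moved a (by rw [swap_apply_left]; exact hab.ne')
  have hb := moved b (by rw [swap_apply_right]; exact hab.ne)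
  omega

theorem admissible.swap_mem {A : Set (Perm (Fin n))} (hA : admissible A) {a b c d : Fin n}
    (hca : c ≤ a) (hab : a < b) (hbd : b ≤ d) (h : swap c d ∈ A) : swap a b ∈ A :=
  hA.2.1 _ h _ (Or.inl ⟨a, b, hab, rfl⟩) (bruhatLE_swap_swap hca hab hbd)

def transpositionsIn (A : Set (Perm (Fin n))) : Set (Perm (Fin n)) :=
  {τ | τ ∈ A ∧ isTransposition τ}

theorem swap_mem_transpositionsIn {A : Set (Perm (Fin n))} {a b : Fin n} (hab : a < b)
    (h : swap a b ∈ A) : swap a b ∈ transpositionsIn A :=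
  ⟨h, a, b, hab, rfl⟩

section Order

variable {S : Set (Perm (Fin n))} {r : Perm (Fin n) → Perm (Fin n) → Prop}
  {x y z w : Perm (Fin n)}

theorem strictTotalOn.trans (h : strictTotalOn S r) (hx : x ∈ S) (hy : y ∈ S) (hz : z ∈ S)
    (hxy : r x y) (hyz : r y z) : r x z :=
  h.2.1 x hx y hy z hz hxy hyz

theorem strictTotalOn.asymm (h : strictTotalOn S r) (hx : x ∈ S) (hy : y ∈ S) (hxy : r x y) :
    ¬ r y x :=
  fun hyx => h.1 x hx (h.trans hx hy hx hxy hyx)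

theorem strictTotalOn.lt_of_not_lt (h : strictTotalOn S r) (hx : x ∈ S) (hy : y ∈ S)
    (hne : x ≠ y) (hxy : ¬ r x y) : r y x :=
  (h.2.2 x hx y hy hne).resolve_left hxy

theorem coversIn.lt_of_lt_right (h : strictTotalOn S r) (hxy : coversIn S r x y) (hw : w ∈ S)
    (hne : w ≠ x) (hwy : r w y) : r w x :=
  h.lt_of_not_lt hxy.1 hw hne.symm fun hxw => hxy.2.2.2 w hw ⟨hxw, hwy⟩

theorem coversIn.lt_of_lt_left (h : strictTotalOn S r) (hxy : coversIn S r x y) (hw : w ∈ S)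
    (hne : w ≠ y) (hxw : r x w) : r y w :=
  h.lt_of_not_lt hw hxy.2.1 hne fun hwy => hxy.2.2.2 w hw ⟨hxw, hwy⟩

theorem coversIn.eq_of_lt_of_lt (h : strictTotalOn S r) (hxy : coversIn S r x y)
    (hyz : coversIn S r y z) (hw : w ∈ S) (hxw : r x w) (hwz : r w z) : w = y := by
  by_contra hne
  rcases h.2.2 w hw y hxy.2.1 hne with hwy | hyw
  · exact hxy.2.2.2 w hw ⟨hxw, hwy⟩
  · exact hyz.2.2.2 w hw ⟨hyw, hwz⟩

end Order

section Compatible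

variable {A : Set (Perm (Fin n))} {r : Perm (Fin n) → Perm (Fin n) → Prop} {i j k : Fin n}

theorem compatibleOrder.lt_iff_lt (hA : admissible A) (hst : strictTotalOn (transpositionsIn A) r)
    (hc : compatibleOrder A r) (hij : i < j) (hjk : j < k) (hik : swap i k ∈ A) :
    r (swap i j) (swap i k) ↔ r (swap i k) (swap j k) := by
  have mij := swap_mem_transpositionsIn hij (hA.swap_mem le_rfl hij hjk.le hik)
  have mik := swap_mem_transpositionsIn (hij.trans hjk) hik
  have mjk := swap_mem_transpositionsIn hjk (hA.swap_mem hij.le hjk le_rfl hik)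
  rcases hc.2.2 i j k hij hjk hik with ⟨h₁, h₂⟩ | ⟨h₁, h₂⟩
  · exact iff_of_true h₁ h₂
  · exact iff_of_false (hst.asymm mik mij h₂) (hst.asymm mjk mik h₁)

theorem compatibleOrder.gt_iff_gt (hA : admissible A) (hst : strictTotalOn (transpositionsIn A) r)
    (hc : compatibleOrder A r) (hij : i < j) (hjk : j < k) (hik : swap i k ∈ A) :
    r (swap i k) (swap i j) ↔ r (swap j k) (swap i k) := by
  have mij := swap_mem_transpositionsIn hij (hA.swap_mem le_rfl hij hjk.le hik)
  have mik := swap_mem_transpositionsIn (hij.trans hjk) hik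
  have mjk := swap_mem_transpositionsIn hjk (hA.swap_mem hij.le hjk le_rfl hik)
  rcases hc.2.2 i j k hij hjk hik with ⟨h₁, h₂⟩ | ⟨h₁, h₂⟩
  · exact iff_of_false (hst.asymm mij mik h₁) (hst.asymm mik mjk h₂)
  · exact iff_of_true h₂ h₁

end Compatible

section CoverChain

variable {A : Set (Perm (Fin n))} {r : Perm (Fin n) → Perm (Fin n) → Prop} {r₁ r₂ s₁ s₂ : Fin n}

theorem swap_lt_swap_left_of_coversIn (hA : admissible A)
    (hst : strictTotalOn (transpositionsIn A) r) (hc : compatibleOrder A r)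
    (hr₁r₂ : r₁ < r₂) (hr₂s₂ : r₂ < s₂) (hne : s₁ ≠ r₂)
    (hc₁ : coversIn (transpositionsIn A) r (swap r₁ s₁) (swap r₁ s₂))
    (hc₂ : coversIn (transpositionsIn A) r (swap r₁ s₂) (swap r₂ s₂)) :
    r (swap r₁ r₂) (swap r₁ s₁) := by
  have hT₂ := hc₁.2.1.1
  have hW := swap_mem_transpositionsIn hr₁r₂ (hA.swap_mem le_rfl hr₁r₂ hr₂s₂.le hT₂)
  have hWT₂ : r (swap r₁ r₂) (swap r₁ s₂) := (hc.lt_iff_lt hA hst hr₁r₂ hr₂s₂ hT₂).2 hc₂.2.2.1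
  exact hc₁.lt_of_lt_right hst hW (fun h => hne (swap_injective_of_left r₁ h).symm) hWT₂

theorem swap_lt_swap_right_of_coversIn (hA : admissible A)
    (hst : strictTotalOn (transpositionsIn A) r) (hc : compatibleOrder A r)
    (hr₁r₂ : r₁ < r₂) (hr₂s₂ : r₂ < s₂) (hr₂s₁ : r₂ < s₁)
    (hc₁ : coversIn (transpositionsIn A) r (swap r₁ s₁) (swap r₁ s₂))
    (hc₂ : coversIn (transpositionsIn A) r (swap r₁ s₂) (swap r₂ s₂)) :
    r (swap r₂ s₁) (swap r₂ s₂) := by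
  obtain ⟨hT₁, hT₂, hT₁T₂, -⟩ := hc₁
  have hT₃ := hc₂.2.1
  have hV : swap r₂ s₁ ∈ transpositionsIn A :=
    swap_mem_transpositionsIn hr₂s₁ (hA.swap_mem hr₁r₂.le hr₂s₁ le_rfl hT₁.1)
  rcases lt_trichotomy s₁ s₂ with hs₁s₂ | rfl | hs₂s₁
  · have hr₁s₁ := hr₁r₂.trans hr₂s₁
    have hU : swap s₁ s₂ ∈ transpositionsIn A :=
      swap_mem_transpositionsIn hs₁s₂ (hA.swap_mem hr₁s₁.le hs₁s₂ le_rfl hT₂.1)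
    have hT₂U := (hc.lt_iff_lt hA hst hr₁s₁ hs₁s₂ hT₂.1).1 hT₁T₂
    have hT₃U : r (swap r₂ s₂) (swap s₁ s₂) := hc₂.lt_of_lt_left hst hU
      (fun h => hr₂s₁.ne ((swap_eq_swap_iff hs₁s₂ hr₂s₂).1 h).1.symm) hT₂U
    exact (hc.lt_iff_lt hA hst hr₂s₁ hs₁s₂ hT₃.1).2 hT₃U
  · exact absurd hT₁T₂ (hst.1 _ hT₁)
  · have hr₁s₂ := hr₁r₂.trans hr₂s₂
    have hU : swap s₂ s₁ ∈ transpositionsIn A :=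
      swap_mem_transpositionsIn hs₂s₁ (hA.swap_mem hr₁s₂.le hs₂s₁ le_rfl hT₁.1)
    have hUT₁ : r (swap s₂ s₁) (swap r₁ s₁) := (hc.gt_iff_gt hA hst hr₁s₂ hs₂s₁ hT₁.1).1 hT₁T₂
    refine hst.lt_of_not_lt hT₃ hV
      (fun h => hs₂s₁.ne' (swap_injective_of_left r₂ h.symm)) fun hT₃V => ?_
    have hVU := (hc.lt_iff_lt hA hst hr₂s₂ hs₂s₁ hV.1).1 hT₃V
    exact hst.asymm hT₂ hT₃ hc₂.2.2.1 <| hst.trans hT₃ hT₁ hT₂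
      (hst.trans hT₃ hV hT₁ hT₃V (hst.trans hV hU hT₁ hVU hUT₁)) hT₁T₂

theorem false_of_coversIn_of_gt (hA : admissible A)
    (hst : strictTotalOn (transpositionsIn A) r) (hc : compatibleOrder A r)
    (hr₁r₂ : r₁ < r₂) (hr₂s₂ : r₂ < s₂) (hr₂s₁ : r₂ < s₁)
    (hc₁ : coversIn (transpositionsIn A) r (swap r₁ s₁) (swap r₁ s₂))
    (hc₂ : coversIn (transpositionsIn A) r (swap r₁ s₂) (swap r₂ s₂)) : False := by
  have hT₁ := hc₁.1.1
  have hV : swap r₂ s₁ ∈ transpositionsIn A :=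
    swap_mem_transpositionsIn hr₂s₁ (hA.swap_mem hr₁r₂.le hr₂s₁ le_rfl hT₁)
  have hWT₁ := swap_lt_swap_left_of_coversIn hA hst hc hr₁r₂ hr₂s₂ hr₂s₁.ne' hc₁ hc₂
  have hT₁V : r (swap r₁ s₁) (swap r₂ s₁) := (hc.lt_iff_lt hA hst hr₁r₂ hr₂s₁ hT₁).1 hWT₁
  have hVT₃ := swap_lt_swap_right_of_coversIn hA hst hc hr₁r₂ hr₂s₂ hr₂s₁ hc₁ hc₂
  have hVT₂ : swap r₂ s₁ = swap r₁ s₂ := hc₁.eq_of_lt_of_lt hst hc₂ hV hT₁V hVT₃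
  exact hr₁r₂.ne ((swap_eq_swap_iff hr₂s₁ (hr₁r₂.trans hr₂s₂)).1 hVT₂).1.symm

theorem false_of_coversIn_of_lt (hA : admissible A)
    (hst : strictTotalOn (transpositionsIn A) r) (hc : compatibleOrder A r)
    (hr₁s₁ : r₁ < s₁) (hs₁r₂ : s₁ < r₂) (hr₂s₂ : r₂ < s₂)
    (hc₁ : coversIn (transpositionsIn A) r (swap r₁ s₁) (swap r₁ s₂))
    (hc₂ : coversIn (transpositionsIn A) r (swap r₁ s₂) (swap r₂ s₂)) : False := by
  have hr₁r₂ := hr₁s₁.trans hs₁r₂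
  have hs₁s₂ := hs₁r₂.trans hr₂s₂
  have hWT₁ := swap_lt_swap_left_of_coversIn hA hst hc hr₁r₂ hr₂s₂ hs₁r₂.ne hc₁ hc₂
  have hT₁ := hc₁.1
  have hT₂ := hc₁.2.1
  have hT₃ := hc₂.2.1
  have hWA := hA.swap_mem le_rfl hr₁r₂ hr₂s₂.le hT₂.1
  have hW : swap r₁ r₂ ∈ transpositionsIn A := swap_mem_transpositionsIn hr₁r₂ hWA
  have hV : swap s₁ r₂ ∈ transpositionsIn A :=
    swap_mem_transpositionsIn hs₁r₂ (hA.swap_mem hr₁s₁.le hs₁r₂ le_rfl hWA)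
  have hU : swap s₁ s₂ ∈ transpositionsIn A :=
    swap_mem_transpositionsIn hs₁s₂ (hA.swap_mem hr₁s₁.le hs₁s₂ le_rfl hT₂.1)
  have hVW := (hc.gt_iff_gt hA hst hr₁s₁ hs₁r₂ hWA).1 hWT₁
  have hT₂U := (hc.lt_iff_lt hA hst hr₁s₁ hs₁s₂ hT₂.1).1 hc₁.2.2.1
  have hT₃U := hc₂.lt_of_lt_left hst hU
    (fun h => hs₁r₂.ne ((swap_eq_swap_iff hs₁s₂ hr₂s₂).1 h).1) hT₂U
  have hUV := (hc.gt_iff_gt hA hst hs₁r₂ hr₂s₂ hU.1).2 hT₃U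
  exact hst.1 _ hT₁ <| hst.trans hT₁ hT₃ hT₁ (hst.trans hT₁ hT₂ hT₃ hc₁.2.2.1 hc₂.2.2.1) <|
    hst.trans hT₃ hV hT₁ (hst.trans hT₃ hU hV hT₃U hUV) (hst.trans hV hW hT₁ hVW hWT₁)

end CoverChain

theorem cover_lemma_general (n : ℕ) (A : Set (Equiv.Perm (Fin n))) (hA : admissible A)
    (r : Equiv.Perm (Fin n) → Equiv.Perm (Fin n) → Prop)
    (hst : strictTotalOn {τ | τ ∈ A ∧ isTransposition τ} r)
    (hc : compatibleOrder A r)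
    (r1 r2 s1 s2 : Fin n) (h12 : r1 < r2) (h2s : r2 < s2) (hs1 : r1 < s1)
    (hc1 : coversIn {τ | τ ∈ A ∧ isTransposition τ} r (Equiv.swap r1 s1) (Equiv.swap r1 s2))
    (hc2 : coversIn {τ | τ ∈ A ∧ isTransposition τ} r (Equiv.swap r1 s2) (Equiv.swap r2 s2)) :
    s1 = r2 := by
  by_contra hne
  rcases lt_or_gt_of_ne hne with hlt | hgt
  · exact false_of_coversIn_of_lt hA hst hc hs1 hlt h2s hc1 hc2
  · exact false_of_coversIn_of_gt hA hst hc h12 h2s hgt hc1 hc2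

theorem cover_lemma (n : ℕ) (A : Set (Equiv.Perm (Fin n))) (hA : admissible A)
    (r : Equiv.Perm (Fin n) → Equiv.Perm (Fin n) → Prop)
    (hst : strictTotalOn {τ | τ ∈ A ∧ isTransposition τ} r)
    (hc : compatibleOrder A r)
    (r1 r2 s1 s2 : Fin n) (h12 : r1 < r2) (h2s : r2 < s2) (hs1 : r1 < s1)
    (hm1 : Equiv.swap r1 s1 ∈ A) (hm2 : Equiv.swap r1 s2 ∈ A)
    (hc1 : coversIn {τ | τ ∈ A ∧ isTransposition τ} r (Equiv.swap r1 s1) (Equiv.swap r1 s2))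
    (hc2 : coversIn {τ | τ ∈ A ∧ isTransposition τ} r (Equiv.swap r1 s2) (Equiv.swap r2 s2)) :
    s1 = r2 :=
  cover_lemma_general n A hA r hst hc r1 r2 s1 s2 h12 h2s hs1 hc1 hc2

end SmoothPerm
end
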